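/- arXiv:2407.14511 — 4 statements merged into one kernel-verified Lean document; each statement's English description precedes it below -/
import Mathlib

section
/- For all positive integers m, n and every complex number t, Σ_{H ≤ ℤ_m × ℤ_n} |H|^t = Σ_{i ∣ m} Σ_{j ∣ n} lcm(i,j)^t · (id_t * φ)(gcd(i,j)), where (id_t * φ)(d) = Σ_{e ∣ d} e^t φ(d/e). -/
/-!
A subgroup `H ≤ G × K` is the preimage of the graph of a homomorphism `f : A → K ⧸ B`, where `A`
is its projection to `G` and `B` its intersection with `K`; every triple `(A, B, f)` occurs
exactly once, and `|H| = |A| |B|`. For `G = ℤ_m`, `K = ℤ_n` the subgroups `A`, `B` are indexed by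
their orders `a ∣ m`, `b ∣ n`, and there are `gcd(a, n / b)` homomorphisms `ℤ_a → ℤ_(n/b)`, so
`Σ_H |H|^t = Σ_{a ∣ m} Σ_{b ∣ n} gcd(a, n / b) (a b)^t`. Writing
`gcd(a, n / b) = Σ_{d ∣ gcd(a, n / b)} φ(d)` and substituting `j = b d` gives the right-hand side,
because `lcm(a, j) · gcd(a, j) / d = a · (j / d)`.
-/

namespace IsAddCyclic

theorem card_addMonoidHom {C D : Type*} [AddGroup C] [IsAddCyclic C] [AddCommGroup D] [Finite D]
    [IsAddCyclic D] : Nat.card (C →+ D) = (Nat.card C).gcd (Nat.card D) := by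
  obtain ⟨g, hg⟩ := IsAddCyclic.exists_generator (α := C)
  have hord : addOrderOf g = Nat.card C := addOrderOf_eq_card_of_forall_mem_zmultiples hg
  rw [Nat.gcd_comm, ← card_nsmulAddMonoidHom_ker D (Nat.card C)]
  refine Nat.card_eq_of_bijective
    (fun f => ⟨f g, by simp [← map_nsmul, ← hord, addOrderOf_nsmul_eq_zero]⟩) ⟨?_, ?_⟩
  · intro f₁ f₂ h
    exact (AddMonoidHom.eq_iff_eq_on_generator hg f₁ f₂).mpr (congrArg Subtype.val h)
  · rintro ⟨y, hy⟩
    have hdvd : addOrderOf y ∣ addOrderOf g := addOrderOf_dvd_of_nsmul_eq_zero (hord ▸ hy)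
    exact ⟨addMonoidHomOfForallMemZMultiples hg hdvd,
      Subtype.ext (addMonoidHomOfForallMemZMultiples_apply_gen hg hdvd)⟩

variable {G : Type*} [AddCommGroup G] [Finite G] [IsAddCyclic G]

theorem eq_ker_nsmul_card (H : AddSubgroup G) :
    H = (nsmulAddMonoidHom (Nat.card H) : G →+ G).ker := by
  refine AddSubgroup.eq_of_le_of_card_ge (fun x hx => ?_) ?_
  · have h := congrArg Subtype.val (card_nsmul_eq_zero' (x := (⟨x, hx⟩ : H)))
    rwa [AddSubgroup.coe_nsmul, AddSubgroup.coe_zero] at h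
  · rw [card_nsmulAddMonoidHom_ker, Nat.gcd_eq_right H.card_addSubgroup_dvd_card]

theorem finsum_addSubgroup {M : Type*} [AddCommMonoid M] (f : ℕ → M) :
    ∑ᶠ H : AddSubgroup G, f (Nat.card H) = ∑ d ∈ (Nat.card G).divisors, f d := by
  rw [← Finset.sum_coe_sort, ← finsum_eq_sum_of_fintype]
  refine finsum_eq_of_bijective
    (fun H => ⟨Nat.card H, Nat.mem_divisors.mpr ⟨H.card_addSubgroup_dvd_card, Nat.card_pos.ne'⟩⟩)
    ⟨fun H K h => ?_, fun ⟨d, hd⟩ => ⟨(nsmulAddMonoidHom d : G →+ G).ker, ?_⟩⟩ fun _ => rfl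
  · calc H = (nsmulAddMonoidHom (Nat.card H) : G →+ G).ker := eq_ker_nsmul_card H
      _ = (nsmulAddMonoidHom (Nat.card K) : G →+ G).ker := by rw [Subtype.mk.inj h]
      _ = K := (eq_ker_nsmul_card K).symm
  · exact Subtype.ext <|
      (card_nsmulAddMonoidHom_ker G d).trans (Nat.gcd_eq_right (Nat.mem_divisors.mp hd).1)

end IsAddCyclic

namespace AddSubgroup

variable {G K : Type*} [AddGroup G] [AddCommGroup K]

theorem card_eq_card_map_fst_mul_card_comap_inr (H : AddSubgroup (G × K)) :
    Nat.card H =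
      Nat.card (H.map (AddMonoidHom.fst G K)) * Nat.card (H.comap (AddMonoidHom.inr G K)) := by
  set proj := (AddMonoidHom.fst G K).comp H.subtype
  have hrange : proj.range = H.map (AddMonoidHom.fst G K) := by
    rw [AddMonoidHom.range_comp, range_subtype]
  have hker : Nat.card proj.ker = Nat.card (H.comap (AddMonoidHom.inr G K)) := by
    refine (Nat.card_eq_of_bijective (fun y => ⟨⟨(0, y.1), y.2⟩, rfl⟩) ⟨?_, ?_⟩).symm
    · intro y z h
      exact Subtype.ext (congrArg (fun p : proj.ker => p.1.1.2) h)
    · rintro ⟨⟨⟨x, y⟩, hxy⟩, hx : x = 0⟩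
      subst hx
      exact ⟨⟨y, hxy⟩, rfl⟩
  rw [← proj.ker.card_mul_index, index_ker, hrange, hker, mul_comm]

variable (A : AddSubgroup G) (B : AddSubgroup K)

def graphMod (f : A →+ K ⧸ B) : AddSubgroup (G × K) where
  carrier := {p | ∃ h : p.1 ∈ A, f ⟨p.1, h⟩ = p.2}
  zero_mem' := ⟨A.zero_mem, map_zero f⟩
  add_mem' := by
    rintro p q ⟨hp, ep⟩ ⟨hq, eq⟩
    exact ⟨A.add_mem hp hq, (map_add f ⟨p.1, hp⟩ ⟨q.1, hq⟩).trans (by rw [ep, eq]; rfl)⟩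
  neg_mem' := by
    rintro p ⟨hp, ep⟩
    exact ⟨A.neg_mem hp, (map_neg f ⟨p.1, hp⟩).trans (by rw [ep]; rfl)⟩

variable {A B}

theorem mem_graphMod {f : A →+ K ⧸ B} {p : G × K} :
    p ∈ graphMod A B f ↔ ∃ h : p.1 ∈ A, f ⟨p.1, h⟩ = p.2 := Iff.rfl

theorem map_fst_graphMod (f : A →+ K ⧸ B) :
    (graphMod A B f).map (AddMonoidHom.fst G K) = A := by
  ext x
  refine ⟨fun ⟨p, ⟨hp, _⟩, hpx⟩ => hpx ▸ hp, fun hx => ?_⟩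
  obtain ⟨y, hy⟩ := QuotientAddGroup.mk_surjective (f ⟨x, hx⟩)
  exact ⟨(x, y), ⟨hx, hy.symm⟩, rfl⟩

theorem comap_inr_graphMod (f : A →+ K ⧸ B) :
    (graphMod A B f).comap (AddMonoidHom.inr G K) = B := by
  ext y
  simp only [mem_comap, AddMonoidHom.inr_apply, mem_graphMod]
  refine ⟨fun ⟨_, hy⟩ => ?_, fun hy => ⟨A.zero_mem, ?_⟩⟩
  · rw [← QuotientAddGroup.eq_zero_iff, ← hy]
    exact map_zero f
  · rw [(QuotientAddGroup.eq_zero_iff y).mpr hy]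
    exact map_zero f

theorem graphMod_injective : Function.Injective (graphMod A B) := by
  intro f g hfg
  ext x
  obtain ⟨y, hy⟩ := QuotientAddGroup.mk_surjective (f x)
  have hxy : ((x : G), y) ∈ graphMod A B g := hfg ▸ ⟨x.2, hy.symm⟩
  obtain ⟨_, hgx⟩ := hxy
  rw [← hy]
  exact hgx.symm

theorem mk_snd_eq_of_fst_eq {H : AddSubgroup (G × K)} {p q : G × K} (hp : p ∈ H) (hq : q ∈ H)
    (h : p.1 = q.1) : (p.2 : K ⧸ H.comap (AddMonoidHom.inr G K)) = q.2 := by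
  rw [QuotientAddGroup.eq_iff_sub_mem]
  have hpq := H.sub_mem hp hq
  rwa [show p - q = (0, p.2 - q.2) from Prod.ext (sub_eq_zero.mpr h) rfl] at hpq

theorem exists_graphMod_eq (H : AddSubgroup (G × K)) :
    ∃ f, graphMod (H.map (AddMonoidHom.fst G K)) (H.comap (AddMonoidHom.inr G K)) f = H := by
  choose s hsH hs1 using fun x : H.map (AddMonoidHom.fst G K) => mem_map.mp x.2
  have hs1 : ∀ x, (s x).1 = x := hs1
  let f : H.map (AddMonoidHom.fst G K) →+ K ⧸ H.comap (AddMonoidHom.inr G K) :=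
    { toFun x := (s x).2
      map_zero' := mk_snd_eq_of_fst_eq (hsH 0) H.zero_mem (hs1 0)
      map_add' x y := mk_snd_eq_of_fst_eq (hsH (x + y)) (H.add_mem (hsH x) (hsH y))
        (by simp [hs1]) }
  refine ⟨f, le_antisymm ?_ fun p hp => ⟨mem_map_of_mem _ hp, ?_⟩⟩
  · rintro p ⟨hp, hfp⟩
    have hdiff : (0, p.2 - (s ⟨p.1, hp⟩).2) ∈ H := (QuotientAddGroup.eq_iff_sub_mem).mp hfp.symm
    have hsum := H.add_mem (hsH ⟨p.1, hp⟩) hdiff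
    rwa [show s ⟨p.1, hp⟩ + (0, p.2 - (s ⟨p.1, hp⟩).2) = p from Prod.ext (by simp [hs1]) (by simp)]
      at hsum
  · exact mk_snd_eq_of_fst_eq (hsH _) hp (hs1 _)

variable (A B) in
theorem card_map_fst_comap_inr_fiber :
    Nat.card {H : AddSubgroup (G × K) //
      H.map (AddMonoidHom.fst G K) = A ∧ H.comap (AddMonoidHom.inr G K) = B} =
      Nat.card (A →+ K ⧸ B) := by
  refine (Nat.card_eq_of_bijective
    (fun f => ⟨graphMod A B f, map_fst_graphMod f, comap_inr_graphMod f⟩) ⟨?_, ?_⟩).symm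
  · exact fun f g h => graphMod_injective (congrArg Subtype.val h)
  · rintro ⟨H, rfl, rfl⟩
    obtain ⟨f, hf⟩ := exists_graphMod_eq H
    exact ⟨f, Subtype.ext hf⟩

theorem finsum_card_addSubgroup_prod [Finite G] [Finite K] {M : Type*} [AddCommMonoid M]
    (F : ℕ → M) :
    ∑ᶠ H : AddSubgroup (G × K), F (Nat.card H) =
      ∑ᶠ (A : AddSubgroup G) (B : AddSubgroup K),
        Nat.card (A →+ K ⧸ B) • F (Nat.card A * Nat.card B) := by
  classical
  have := Fintype.ofFinite (AddSubgroup (G × K))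
  have := Fintype.ofFinite (AddSubgroup G)
  have := Fintype.ofFinite (AddSubgroup K)
  let π : AddSubgroup (G × K) → AddSubgroup G × AddSubgroup K :=
    fun H => (H.map (AddMonoidHom.fst G K), H.comap (AddMonoidHom.inr G K))
  simp only [finsum_eq_sum_of_fintype]
  rw [← Fintype.sum_prod_type', ← Finset.sum_fiberwise Finset.univ π]
  refine Finset.sum_congr rfl fun ⟨A, B⟩ _ => ?_
  have hfiber : ∀ H ∈ Finset.univ.filter (π · = (A, B)),
      F (Nat.card H) = F (Nat.card A * Nat.card B) := by
    intro H hH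
    simp only [Finset.mem_filter, π, Prod.mk.injEq] at hH
    rw [card_eq_card_map_fst_mul_card_comap_inr, hH.2.1, hH.2.2]
  rw [Finset.sum_congr rfl hfiber, Finset.sum_const, ← card_map_fst_comap_inr_fiber]
  congr 1
  rw [Nat.card_eq_fintype_card, Fintype.card_subtype]
  simp only [π, Prod.ext_iff]

end AddSubgroup

namespace Nat

theorem sum_divisors_sum_divisors_gcd_div {M : Type*} [AddCommMonoid M] (i : ℕ) {n : ℕ}
    (hn : n ≠ 0) (f : ℕ → ℕ → M) :
    ∑ j ∈ n.divisors, ∑ d ∈ (i.gcd j).divisors, f (j / d) d =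
      ∑ b ∈ n.divisors, ∑ d ∈ (i.gcd (n / b)).divisors, f b d := by
  rw [Finset.sum_sigma', Finset.sum_sigma']
  refine Finset.sum_nbij' (fun x => ⟨x.1 / x.2, x.2⟩) (fun x => ⟨x.1 * x.2, x.2⟩) ?_ ?_ ?_ ?_
    fun _ _ => rfl
  · rintro ⟨j, d⟩ hx
    simp only [Finset.mem_sigma, mem_divisors, dvd_gcd_iff] at hx ⊢
    obtain ⟨⟨hjn, -⟩, ⟨hdi, hdj⟩, -⟩ := hx
    have hjdn : j / d ∣ n := (div_dvd_of_dvd hdj).trans hjn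
    have hdn : d ∣ n / (j / d) := (dvd_div_iff_mul_dvd hjdn).mpr (by rwa [Nat.div_mul_cancel hdj])
    have hn' : n / (j / d) ≠ 0 :=
      (div_ne_zero_iff_of_dvd hjdn).mpr ⟨hn, ne_zero_of_dvd_ne_zero hn hjdn⟩
    exact ⟨⟨hjdn, hn⟩, ⟨hdi, hdn⟩, gcd_ne_zero_right hn'⟩
  · rintro ⟨b, d⟩ hx
    simp only [Finset.mem_sigma, mem_divisors, dvd_gcd_iff] at hx ⊢
    obtain ⟨⟨hbn, -⟩, ⟨hdi, hdnb⟩, -⟩ := hx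
    have hbdn : b * d ∣ n := (dvd_div_iff_mul_dvd hbn).mp hdnb
    exact ⟨⟨hbdn, hn⟩, ⟨hdi, dvd_mul_left d b⟩,
      gcd_ne_zero_right (ne_zero_of_dvd_ne_zero hn hbdn)⟩
  · rintro ⟨j, d⟩ hx
    simp only [Finset.mem_sigma, mem_divisors, dvd_gcd_iff] at hx
    simp [Nat.div_mul_cancel hx.2.1.2]
  · rintro ⟨b, d⟩ hx
    simp only [Finset.mem_sigma, mem_divisors, dvd_gcd_iff] at hx
    obtain ⟨⟨hbn, -⟩, ⟨-, hdnb⟩, -⟩ := hx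
    have hnb : n / b ≠ 0 := (div_ne_zero_iff_of_dvd hbn).mpr ⟨hn, ne_zero_of_dvd_ne_zero hn hbn⟩
    simp [Nat.mul_div_cancel b (pos_of_ne_zero (ne_zero_of_dvd_ne_zero hnb hdnb))]

variable {R : Type*} [CommSemiring R] (F : ℕ → R) (hF : ∀ x y, F (x * y) = F x * F y)
include hF

theorem mul_sum_divisors_gcd_mul_totient (i j : ℕ) :
    F (i.lcm j) * ∑ e ∈ (i.gcd j).divisors, F e * φ (i.gcd j / e) =
      ∑ d ∈ (i.gcd j).divisors, F (i * (j / d)) * φ d := by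
  rw [Finset.mul_sum, ← sum_div_divisors]
  refine Finset.sum_congr rfl fun d hd => ?_
  obtain ⟨hdg, hg⟩ := mem_divisors.mp hd
  have hdj : d ∣ j := hdg.trans (gcd_dvd_right i j)
  have hlcm : i.lcm j * (i.gcd j / d) = i * (j / d) := by
    rw [← Nat.mul_div_assoc _ hdg, ← Nat.mul_div_assoc _ hdj, mul_comm, gcd_mul_lcm]
  rw [Nat.div_div_self hdg hg, ← mul_assoc, ← hF, hlcm]

theorem sum_divisors_lcm_mul_sum_divisors_gcd (m : ℕ) {n : ℕ} (hn : n ≠ 0) :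
    ∑ i ∈ m.divisors, ∑ j ∈ n.divisors,
        F (i.lcm j) * ∑ e ∈ (i.gcd j).divisors, F e * φ (i.gcd j / e) =
      ∑ a ∈ m.divisors, ∑ b ∈ n.divisors, a.gcd (n / b) • F (a * b) := by
  refine Finset.sum_congr rfl fun a _ => ?_
  simp_rw [mul_sum_divisors_gcd_mul_totient F hF]
  rw [sum_divisors_sum_divisors_gcd_div a hn (fun b d => F (a * b) * φ d)]
  refine Finset.sum_congr rfl fun b _ => ?_
  rw [← Finset.mul_sum, ← cast_sum, sum_totient, nsmul_eq_mul, mul_comm]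

end Nat

theorem sigma_t_subgroups' (m n : ℕ) (hm : 0 < m) (hn : 0 < n) (t : ℂ) :
    (∑ᶠ H : AddSubgroup (ZMod m × ZMod n), (Nat.card H : ℂ) ^ t) =
      ∑ i ∈ m.divisors, ∑ j ∈ n.divisors,
        (Nat.lcm i j : ℂ) ^ t *
          ∑ e ∈ (Nat.gcd i j).divisors, (e : ℂ) ^ t * (Nat.totient (Nat.gcd i j / e) : ℂ) := by
  have : NeZero m := ⟨hm.ne'⟩
  have : NeZero n := ⟨hn.ne'⟩
  have hcard (A : AddSubgroup (ZMod m)) (B : AddSubgroup (ZMod n)) :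
      Nat.card (A →+ ZMod n ⧸ B) = (Nat.card A).gcd (n / Nat.card B) := by
    have := isAddCyclic_of_surjective _ (QuotientAddGroup.mk'_surjective B)
    rw [IsAddCyclic.card_addMonoidHom, ← B.index_eq_card,
      Nat.eq_div_of_mul_eq_right Nat.card_pos.ne' (B.card_mul_index.trans (Nat.card_zmod n))]
  rw [AddSubgroup.finsum_card_addSubgroup_prod (fun k => (k : ℂ) ^ t)]
  simp only [hcard]
  rw [IsAddCyclic.finsum_addSubgroup (fun a => ∑ᶠ B : AddSubgroup (ZMod n),
    (a.gcd (n / Nat.card B)) • ((a * Nat.card B : ℕ) : ℂ) ^ t), Nat.card_zmod]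
  have hmul (x y : ℕ) : ((x * y : ℕ) : ℂ) ^ t = (x : ℂ) ^ t * (y : ℂ) ^ t := by
    push_cast
    exact Complex.natCast_mul_natCast_cpow x y t
  refine (Finset.sum_congr rfl fun a _ => ?_).trans
    (Nat.sum_divisors_lcm_mul_sum_divisors_gcd (fun k => (k : ℂ) ^ t) hmul m hn.ne').symm
  exact (IsAddCyclic.finsum_addSubgroup (fun b => a.gcd (n / b) • ((a * b : ℕ) : ℂ) ^ t)).trans
    (by rw [Nat.card_zmod])
end

section
/- For all positive integers m, n, the sum of the exponents of all subgroups of ℤ_m × ℤ_n equals σ(m)·σ(n), where σ is the sum-of-divisors function and the exponent of a finite group is the least common multiple of the orders of its elements. -/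
open AddSubgroup Finset

lemma mem_zmult_iff_int {n b : ℕ} (hb : b ∣ n) (t : ℤ) :
    ((t : ZMod n) ∈ zmultiples ((b : ℕ) : ZMod n)) ↔ (b : ℤ) ∣ t := by
  constructor
  · rintro ⟨k, hk⟩
    have h : (((k * b - t : ℤ)) : ZMod n) = 0 := by
      push_cast
      rw [← hk]
      push_cast [zsmul_eq_mul]
      ring
    rw [ZMod.intCast_zmod_eq_zero_iff_dvd] at h
    have hbn : (b : ℤ) ∣ (n : ℤ) := Int.natCast_dvd_natCast.2 hb
    have h2 : (b:ℤ) ∣ k * b - t := hbn.trans h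
    have h3 : (b:ℤ) ∣ k * b := ⟨k, mul_comm _ _⟩
    have h4 : (b:ℤ) ∣ -t := by simpa using h3.sub h2
    exact (dvd_neg).mp h4
  · rintro ⟨s, rfl⟩
    exact ⟨s, by push_cast [zsmul_eq_mul]; ring⟩

lemma mem_zmult_iff {n b : ℕ} (hb : b ∣ n) (t : ℕ) :
    ((t : ZMod n) ∈ zmultiples ((b : ℕ) : ZMod n)) ↔ b ∣ t := by
  have := mem_zmult_iff_int hb (t : ℤ)
  push_cast at this
  rw [this]
  exact Int.natCast_dvd_natCast

lemma exists_divisor_gen {n : ℕ} (K : AddSubgroup (ZMod n)) :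
    ∃ b, b ∣ n ∧ K = zmultiples ((b : ℕ) : ZMod n) := by
  obtain ⟨a, ha⟩ := Int.subgroup_cyclic (K.comap (Int.castAddHom (ZMod n)))
  have hsurj : Function.Surjective (Int.castAddHom (ZMod n)) := ZMod.intCast_surjective
  have hmap := AddSubgroup.map_comap_eq_self_of_surjective hsurj K
  rw [ha, ← AddSubgroup.zmultiples_eq_closure, ← Int.zmultiples_natAbs,
    AddMonoidHom.map_zmultiples] at hmap
  have hnmem : (n : ℤ) ∈ K.comap (Int.castAddHom (ZMod n)) := by
    simp only [AddSubgroup.mem_comap, Int.coe_castAddHom, Int.cast_natCast,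
      ZMod.natCast_self]
    exact zero_mem K
  rw [ha, ← AddSubgroup.zmultiples_eq_closure] at hnmem
  obtain ⟨k, hk⟩ := AddSubgroup.mem_zmultiples_iff.1 hnmem
  have hadvd : a ∣ (n : ℤ) := ⟨k, by rw [← hk, zsmul_eq_mul, Int.cast_id, mul_comm]⟩
  refine ⟨a.natAbs, Int.natCast_dvd_natCast.mp (by simpa [Int.natAbs_dvd] using hadvd), ?_⟩
  rw [← hmap]
  congr 1
  simp only [Int.coe_castAddHom, Int.cast_natCast]

lemma gen_inj {n b b' : ℕ} (hb : b ∣ n) (hb' : b' ∣ n)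
    (h : zmultiples ((b:ℕ) : ZMod n) = zmultiples ((b':ℕ) : ZMod n)) : b = b' :=
  Nat.dvd_antisymm
    ((mem_zmult_iff hb b').mp (h ▸ mem_zmultiples _))
    ((mem_zmult_iff hb' b).mp (h.symm ▸ mem_zmultiples _))

/-- The subgroup of `ZMod m × ZMod n` generated by `(a, c)` and `(0, b)`. -/
def Hsub (m n a b c : ℕ) : AddSubgroup (ZMod m × ZMod n) :=
  AddSubgroup.closure {((a : ZMod m), (c : ZMod n)), ((0 : ZMod m), (b : ZMod n))}

lemma mem_Hsub_iff {m n a b c : ℕ} {x : ZMod m} {y : ZMod n} :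
    (x, y) ∈ Hsub m n a b c ↔
      ∃ j : ℤ, x = j • (a : ZMod m) ∧ y - j • ((c : ℕ) : ZMod n) ∈ zmultiples ((b : ℕ) : ZMod n) := by
  rw [Hsub, AddSubgroup.mem_closure_pair]
  constructor
  · rintro ⟨j, k, h⟩
    rw [Prod.ext_iff] at h
    obtain ⟨h1, h2⟩ := h
    simp only [Prod.smul_mk, Prod.mk_add_mk, smul_zero, add_zero] at h1 h2
    exact ⟨j, h1.symm, ⟨k, by rw [← h2]; abel⟩⟩
  · rintro ⟨j, hx, ⟨k, hk⟩⟩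
    refine ⟨j, k, ?_⟩
    rw [Prod.ext_iff]
    constructor
    · simp [hx]
    · simp only [Prod.smul_mk, Prod.mk_add_mk]
      simp only at hk
      rw [hk]
      abel

lemma addOrderOf_cast_of_dvd {m a : ℕ} (hm : m ≠ 0) (ha : a ∣ m) :
    addOrderOf ((a : ℕ) : ZMod m) = m / a := by
  rw [ZMod.addOrderOf_coe a hm, Nat.gcd_comm, Nat.gcd_eq_left ha]

lemma smul_cast_mem_zmult {n b u c : ℕ} (hb : b ∣ n) (hd : b ∣ u * c) (t : ℤ) :
    (((u : ℕ) : ℤ) * t) • ((c : ℕ) : ZMod n) ∈ zmultiples ((b : ℕ) : ZMod n) := by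
  have hw : (((u * c : ℕ) : ZMod n)) ∈ zmultiples ((b:ℕ) : ZMod n) := (mem_zmult_iff hb _).2 hd
  have : (((u : ℕ) : ℤ) * t) • ((c : ℕ) : ZMod n) = t • (((u * c : ℕ) : ZMod n)) := by
    rw [mul_comm, mul_smul, natCast_zsmul]
    congr 1
    rw [nsmul_eq_mul]
    push_cast
    ring
  rw [this]
  exact zsmul_mem hw t

lemma Hsub_snd {m n a b c : ℕ} (hm : m ≠ 0) (ha : a ∣ m) (hb : b ∣ n) (hd : b ∣ m / a * c)
    (y : ZMod n) :
    ((0 : ZMod m), y) ∈ Hsub m n a b c ↔ y ∈ zmultiples ((b:ℕ) : ZMod n) := by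
  rw [mem_Hsub_iff]
  constructor
  · rintro ⟨j, hj, hy⟩
    have hdvd : (((m / a : ℕ) : ℤ)) ∣ j := by
      rw [← addOrderOf_cast_of_dvd hm ha]
      exact addOrderOf_dvd_iff_zsmul_eq_zero.2 hj.symm
    obtain ⟨t, rfl⟩ := hdvd
    have hjc := smul_cast_mem_zmult hb hd t (n := n) (u := m / a) (c := c)
    have : y = (y - (((m / a : ℕ) : ℤ) * t) • ((c : ℕ) : ZMod n))
        + (((m / a : ℕ) : ℤ) * t) • ((c : ℕ) : ZMod n) := by abel
    rw [this]
    exact add_mem hy hjc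
  · intro hy
    exact ⟨0, by simp, by simpa using hy⟩

lemma exp_Hsub {m n : ℕ} (hm : m ≠ 0) (hn : n ≠ 0) (a b c : ℕ) (ha : a ∣ m) (hb : b ∣ n) :
    AddMonoid.exponent (Hsub m n a b c) =
      Nat.lcm (m / a) (Nat.lcm (n / n.gcd c) (n / b)) := by
  set G := ZMod m × ZMod n
  set g1 : G := ((a : ZMod m), (c : ZMod n)) with hg1
  set g2 : G := ((0 : ZMod m), (b : ZMod n)) with hg2
  have h1 : g1 ∈ Hsub m n a b c := AddSubgroup.subset_closure (by left; rfl)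
  have h2 : g2 ∈ Hsub m n a b c := AddSubgroup.subset_closure (by right; rfl)
  have ho1 : addOrderOf g1 = Nat.lcm (m / a) (n / n.gcd c) := by
    rw [hg1, Prod.addOrderOf_mk, addOrderOf_cast_of_dvd hm ha, ZMod.addOrderOf_coe c hn]
  have ho2 : addOrderOf g2 = n / b := by
    rw [hg2, Prod.addOrderOf_mk, addOrderOf_zero, Nat.lcm_one_left,
      ZMod.addOrderOf_coe b hn, Nat.gcd_comm, Nat.gcd_eq_left hb]
  set e := Nat.lcm (m / a) (Nat.lcm (n / n.gcd c) (n / b)) with he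
  have hee : e = Nat.lcm (addOrderOf g1) (addOrderOf g2) := by
    rw [ho1, ho2, Nat.lcm_assoc]
  apply Nat.dvd_antisymm
  · rw [AddMonoid.exponent_dvd]
    rintro ⟨⟨x, y⟩, hxy⟩
    rw [AddSubgroup.addOrderOf_mk]
    apply addOrderOf_dvd_of_nsmul_eq_zero
    obtain ⟨j, k, hjk⟩ := AddSubgroup.mem_closure_pair.1 hxy
    have he1 : e • g1 = 0 := by
      rw [← addOrderOf_dvd_iff_nsmul_eq_zero, hee]
      exact Nat.dvd_lcm_left _ _
    have he2 : e • g2 = 0 := by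
      rw [← addOrderOf_dvd_iff_nsmul_eq_zero, hee]
      exact Nat.dvd_lcm_right _ _
    show e • ((x, y) : G) = 0
    rw [← hjk, smul_add, smul_comm e j, smul_comm e k, he1, he2, smul_zero, smul_zero,
      add_zero]
  · rw [hee]
    exact Nat.lcm_dvd
      (by rw [← AddSubgroup.addOrderOf_mk g1 h1]; exact AddMonoid.addOrder_dvd_exponent _)
      (by rw [← AddSubgroup.addOrderOf_mk g2 h2]; exact AddMonoid.addOrder_dvd_exponent _)

lemma g1_mem (m n a b c : ℕ) : ((a : ZMod m), (c : ZMod n)) ∈ Hsub m n a b c :=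
  AddSubgroup.subset_closure (by left; rfl)
lemma g2_mem (m n a b c : ℕ) : ((0 : ZMod m), (b : ZMod n)) ∈ Hsub m n a b c :=
  AddSubgroup.subset_closure (by right; rfl)

lemma Hsub_inj {m n : ℕ} (hm : m ≠ 0) (hn : n ≠ 0) {a b c a' b' c' : ℕ}
    (ha : a ∣ m) (hb : b ∣ n) (hc : c < b) (hd : b ∣ m / a * c)
    (ha' : a' ∣ m) (hb' : b' ∣ n) (hc' : c' < b') (hd' : b' ∣ m / a' * c')
    (h : Hsub m n a b c = Hsub m n a' b' c') : a = a' ∧ b = b' ∧ c = c' := by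
  have fst_mem : ∀ (A B C : ℕ) (x : ZMod m) (y : ZMod n), (x, y) ∈ Hsub m n A B C →
      x ∈ zmultiples ((A:ℕ) : ZMod m) := by
    intro A B C x y hxy
    obtain ⟨j, hj, -⟩ := mem_Hsub_iff.1 hxy
    rw [hj]
    exact zsmul_mem (mem_zmultiples _) j
  have haa : a = a' := by
    apply Nat.dvd_antisymm
    · exact (mem_zmult_iff ha a').1 (fst_mem a b c _ _ (h ▸ g1_mem m n a' b' c'))
    · exact (mem_zmult_iff ha' a).1 (fst_mem a' b' c' _ _ (h.symm ▸ g1_mem m n a b c))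
  have hbb : b = b' := by
    apply Nat.dvd_antisymm
    · exact (mem_zmult_iff hb b').1 ((Hsub_snd hm ha hb hd _).1 (h ▸ g2_mem m n a' b' c'))
    · exact (mem_zmult_iff hb' b).1 ((Hsub_snd hm ha' hb' hd' _).1 (h.symm ▸ g2_mem m n a b c))
  subst haa
  subst hbb
  refine ⟨rfl, rfl, ?_⟩
  obtain ⟨j, hj, hy⟩ := mem_Hsub_iff.1 (h ▸ g1_mem m n a b c)
  have h1j : (1 - j) • ((a:ℕ) : ZMod m) = 0 := by
    rw [sub_smul, one_smul, ← hj, sub_self]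
  have hdvd : (((m / a : ℕ) : ℤ)) ∣ (1 - j) := by
    rw [← addOrderOf_cast_of_dvd hm ha]
    exact addOrderOf_dvd_iff_zsmul_eq_zero.2 h1j
  obtain ⟨t, ht⟩ := hdvd
  have hcc : ((c : ℕ) : ZMod n) - ((c' : ℕ) : ZMod n) ∈ zmultiples ((b:ℕ) : ZMod n) := by
    have e1 : ((c:ℕ) : ZMod n) - ((c':ℕ) : ZMod n) =
        (((c:ℕ) : ZMod n) - j • ((c':ℕ) : ZMod n)) - ((1 - j) • ((c':ℕ) : ZMod n)) := by
      rw [sub_smul, one_smul]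
      abel
    rw [e1, ht]
    exact sub_mem hy (smul_cast_mem_zmult hb hd' t)
  have hbd : (b : ℤ) ∣ (c : ℤ) - (c' : ℤ) := by
    rw [← mem_zmult_iff_int hb]
    push_cast
    exact hcc
  have h3 : b ∣ ((c : ℤ) - (c' : ℤ)).natAbs := by
    simpa using Int.natAbs_dvd_natAbs.2 hbd
  have h4 : ((c : ℤ) - (c' : ℤ)).natAbs < b := by omega
  have h5 := Nat.eq_zero_of_dvd_of_lt h3 h4
  omega

lemma Hsub_surj {m n : ℕ} (hm : m ≠ 0) (hn : n ≠ 0) (H : AddSubgroup (ZMod m × ZMod n)) :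
    ∃ a b c : ℕ, (a ∣ m ∧ b ∣ n ∧ c < b ∧ b ∣ m / a * c) ∧ Hsub m n a b c = H := by
  haveI : NeZero n := ⟨hn⟩
  obtain ⟨a, ha, hA⟩ := exists_divisor_gen (H.map (AddMonoidHom.fst (ZMod m) (ZMod n)))
  obtain ⟨b, hb, hK⟩ := exists_divisor_gen (H.comap (AddMonoidHom.inr (ZMod m) (ZMod n)))
  have hbpos : 0 < b := Nat.pos_of_ne_zero (fun h0 => hn (by simpa [h0] using hb))
  have hbK : ((0 : ZMod m), ((b:ℕ) : ZMod n)) ∈ H := by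
    have hx : ((b:ℕ) : ZMod n) ∈ H.comap (AddMonoidHom.inr (ZMod m) (ZMod n)) :=
      hK ▸ mem_zmultiples _
    simpa [AddSubgroup.mem_comap] using hx
  have haA : ((a:ℕ) : ZMod m) ∈ H.map (AddMonoidHom.fst (ZMod m) (ZMod n)) :=
    hA ▸ mem_zmultiples _
  obtain ⟨⟨x0, y0⟩, hx0, hfst⟩ := AddSubgroup.mem_map.1 haA
  simp only [AddMonoidHom.coe_fst] at hfst
  set c := y0.val % b with hcdef
  have hcb : c < b := Nat.mod_lt _ hbpos
  have hy0 : ((y0.val : ℕ) : ZMod n) = y0 := ZMod.natCast_rightInverse y0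
  have hdecomp : ((c : ℕ) : ZMod n) = y0 - (y0.val / b) • ((b:ℕ) : ZMod n) := by
    have e1 : (y0.val / b) • ((b:ℕ) : ZMod n) = (((y0.val / b) * b : ℕ) : ZMod n) := by
      rw [nsmul_eq_mul]
      push_cast
      ring
    rw [e1, eq_sub_iff_add_eq, ← Nat.cast_add]
    conv_rhs => rw [← hy0]
    congr 1
    rw [hcdef, Nat.mod_add_div']
  have hgc : (((a:ℕ) : ZMod m), ((c:ℕ) : ZMod n)) ∈ H := by
    have h2 := sub_mem hx0 (AddSubgroup.nsmul_mem H hbK (y0.val / b))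
    have e2 : ((x0, y0) : ZMod m × ZMod n) - (y0.val / b) • ((0 : ZMod m), ((b:ℕ) : ZMod n))
        = (((a:ℕ) : ZMod m), ((c:ℕ) : ZMod n)) := by
      rw [Prod.ext_iff]
      constructor
      · simp [hfst]
      · simp only [Prod.smul_mk, Prod.mk_sub_mk]
        rw [hdecomp]
    rwa [e2] at h2
  have hd : b ∣ m / a * c := by
    have hsm := AddSubgroup.nsmul_mem H hgc (m / a)
    have e3 : (m / a) • ((((a:ℕ) : ZMod m), ((c:ℕ) : ZMod n)) : ZMod m × ZMod n)
        = ((0 : ZMod m), (((m / a * c : ℕ)) : ZMod n)) := by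
      rw [Prod.ext_iff]
      constructor
      · show (m / a) • ((a:ℕ) : ZMod m) = 0
        rw [nsmul_eq_mul, ← Nat.cast_mul, Nat.div_mul_cancel ha, ZMod.natCast_self]
      · show (m / a) • ((c:ℕ) : ZMod n) = _
        rw [nsmul_eq_mul, ← Nat.cast_mul]
    rw [e3] at hsm
    have h4 : ((m / a * c : ℕ) : ZMod n) ∈ H.comap (AddMonoidHom.inr (ZMod m) (ZMod n)) := by
      simpa [AddSubgroup.mem_comap] using hsm
    rw [hK] at h4
    exact (mem_zmult_iff hb _).1 h4
  refine ⟨a, b, c, ⟨ha, hb, hcb, hd⟩, ?_⟩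
  apply le_antisymm
  · rw [Hsub, AddSubgroup.closure_le]
    rintro z (rfl | rfl)
    · exact hgc
    · exact hbK
  · rintro ⟨x, y⟩ hxy
    have hxA : x ∈ H.map (AddMonoidHom.fst (ZMod m) (ZMod n)) :=
      AddSubgroup.mem_map.2 ⟨(x, y), hxy, rfl⟩
    rw [hA] at hxA
    obtain ⟨j, hj⟩ := AddSubgroup.mem_zmultiples_iff.1 hxA
    rw [mem_Hsub_iff]
    refine ⟨j, hj.symm, ?_⟩
    have h2 := sub_mem hxy (zsmul_mem hgc j)
    have e4 : ((x, y) : ZMod m × ZMod n) - j • (((a:ℕ) : ZMod m), ((c:ℕ) : ZMod n))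
        = ((0 : ZMod m), y - j • ((c:ℕ) : ZMod n)) := by
      rw [Prod.ext_iff]
      constructor
      · simp only [Prod.smul_mk, Prod.mk_sub_mk, smul_zero, sub_zero]
        rw [hj, sub_self]
      · simp [Prod.smul_mk]
    rw [e4] at h2
    have h5 : y - j • ((c:ℕ) : ZMod n) ∈ H.comap (AddMonoidHom.inr (ZMod m) (ZMod n)) := by
      simpa [AddSubgroup.mem_comap] using h2
    rw [hK] at h5
    exact h5

lemma lcm_div_div {n x y : ℕ} (hn : n ≠ 0) (hx : x ∣ n) (hy : y ∣ n) :
    Nat.lcm (n / x) (n / y) = n / Nat.gcd x y := by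
  have hx0 : x ≠ 0 := fun h => hn (by simpa [h] using hx)
  have hy0 : y ≠ 0 := fun h => hn (by simpa [h] using hy)
  set g := Nat.gcd x y with hg
  have hg0 : g ≠ 0 := Nat.gcd_ne_zero_left hx0
  set x' := x / g with hx'
  set y' := y / g with hy'
  have hxg : x = g * x' := (Nat.mul_div_cancel' (Nat.gcd_dvd_left x y)).symm
  have hyg : y = g * y' := (Nat.mul_div_cancel' (Nat.gcd_dvd_right x y)).symm
  have hcop : Nat.Coprime x' y' := Nat.coprime_div_gcd_div_gcd (Nat.pos_of_ne_zero hg0)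
  obtain ⟨t, ht⟩ : Nat.lcm x y ∣ n := Nat.lcm_dvd hx hy
  have hL : Nat.lcm x y = g * (x' * y') := by
    have h1 : g * Nat.lcm x y = x * y := Nat.gcd_mul_lcm x y
    have h2 : x * y = g * (g * (x' * y')) := by rw [hxg, hyg]; ring
    rw [h2] at h1
    exact Nat.eq_of_mul_eq_mul_left (Nat.pos_of_ne_zero hg0) h1
  have hnx : n / x = y' * t := by
    have : n = x * (y' * t) := by rw [ht, hL, hxg]; ring
    rw [this, Nat.mul_div_cancel_left _ (Nat.pos_of_ne_zero hx0)]
  have hny : n / y = x' * t := by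
    have : n = y * (x' * t) := by rw [ht, hL, hyg]; ring
    rw [this, Nat.mul_div_cancel_left _ (Nat.pos_of_ne_zero hy0)]
  have hng : n / g = x' * y' * t := by
    have : n = g * (x' * y' * t) := by rw [ht, hL]; ring
    rw [this, Nat.mul_div_cancel_left _ (Nat.pos_of_ne_zero hg0)]
  rw [hnx, hny, hng, Nat.lcm_mul_right, Nat.Coprime.lcm_eq_mul hcop.symm]
  ring

lemma lcm_term_eq {n b : ℕ} (hn : n ≠ 0) (hb : b ∣ n) (c : ℕ) :
    Nat.lcm (n / n.gcd c) (n / b) = n / Nat.gcd b c := by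
  rw [lcm_div_div hn (Nat.gcd_dvd_left n c) hb]
  congr 1
  rw [Nat.gcd_comm (Nat.gcd n c) b, Nat.gcd_comm n c, ← Nat.gcd_assoc]
  rw [Nat.gcd_comm b c]
  exact Nat.gcd_eq_left ((Nat.gcd_dvd_right c b).trans hb)

lemma inner_reindex {n b u : ℕ} (hn : n ≠ 0) (hb : b ∣ n) (hu : u ≠ 0) :
    ∑ c ∈ (range b).filter (fun c => b ∣ u * c), Nat.lcm u (n / Nat.gcd b c)
      = ∑ e ∈ range (Nat.gcd u b), Nat.lcm u ((n / b) * (Nat.gcd u b / Nat.gcd (Nat.gcd u b) e)) := by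
  have hb0 : b ≠ 0 := fun h => hn (by simpa [h] using hb)
  set g := Nat.gcd u b with hg
  have hg0 : g ≠ 0 := Nat.gcd_ne_zero_left hu
  set k := b / g with hk
  have hbk : b = k * g := by rw [hk, Nat.div_mul_cancel (Nat.gcd_dvd_right u b)]
  have hk0 : k ≠ 0 := by
    rintro h
    rw [h, zero_mul] at hbk
    exact hb0 hbk
  obtain ⟨u', hu'⟩ : g ∣ u := Nat.gcd_dvd_left u b
  have hcop : Nat.Coprime k u' := by
    have h1 := (Nat.coprime_div_gcd_div_gcd (m := u) (n := b) (Nat.pos_of_ne_zero hg0)).symm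
    have h2 : u / g = u' := by rw [hu', Nat.mul_div_cancel_left _ (Nat.pos_of_ne_zero hg0)]
    rwa [← hg, ← hk, h2] at h1
  have key : ∀ c, b ∣ u * c → k ∣ c := by
    intro c hdvd
    obtain ⟨s, hs⟩ := hdvd
    have h1 : u' * c = k * s := by
      have h2 : g * (u' * c) = g * (k * s) := by
        calc g * (u' * c) = u * c := by rw [hu']; ring
          _ = b * s := hs
          _ = g * (k * s) := by rw [hbk]; ring
      exact Nat.eq_of_mul_eq_mul_left (Nat.pos_of_ne_zero hg0) h2
    exact hcop.dvd_of_dvd_mul_left ⟨s, h1⟩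
  symm
  apply Finset.sum_nbij' (fun e => k * e) (fun c => c / k)
  · intro e he
    rw [mem_range] at he
    rw [mem_filter, mem_range]
    refine ⟨?_, ?_⟩
    · calc k * e < k * g := mul_lt_mul_of_pos_left he (Nat.pos_of_ne_zero hk0)
        _ = b := hbk.symm
    · rw [hbk, hu']
      exact ⟨u' * e, by ring⟩
  · intro c hc
    rw [mem_filter, mem_range] at hc
    obtain ⟨hcb, hdvd⟩ := hc
    rw [mem_range]
    have hlt : c < k * g := by rw [← hbk]; exact hcb
    exact Nat.div_lt_of_lt_mul hlt
  · intro e _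
    rw [Nat.mul_div_cancel_left _ (Nat.pos_of_ne_zero hk0)]
  · intro c hc
    rw [mem_filter, mem_range] at hc
    exact Nat.mul_div_cancel' (key c hc.2)
  · intro e _
    congr 1
    have hgcd : Nat.gcd b (k * e) = k * Nat.gcd g e := by rw [hbk, Nat.gcd_mul_left]
    rw [hgcd]
    set t := Nat.gcd g e with htdef
    have htg : t ∣ g := Nat.gcd_dvd_left g e
    have ht0 : t ≠ 0 := Nat.gcd_ne_zero_left hg0
    have hn2 : n = (k * t) * ((g / t) * (n / b)) := by
      calc n = b * (n / b) := (Nat.mul_div_cancel' hb).symm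
        _ = (k * g) * (n / b) := by rw [← hbk]
        _ = (k * (t * (g / t))) * (n / b) := by rw [Nat.mul_div_cancel' htg]
        _ = (k * t) * ((g / t) * (n / b)) := by ring
    have hrhs : n / (k * t) = (g / t) * (n / b) := by
      conv_lhs => rw [hn2]
      rw [Nat.mul_div_cancel_left _ (Nat.pos_of_ne_zero (Nat.mul_ne_zero hk0 ht0))]
    rw [hrhs]
    ring

lemma totient_grouping (g : ℕ) (hg : g ≠ 0) (F : ℕ → ℕ) :
    ∑ e ∈ range g, F (g / Nat.gcd g e) = ∑ d ∈ g.divisors, Nat.totient d * F d := by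
  haveI : NeZero g := ⟨hg⟩
  have h1 : ∑ e ∈ range g, F (g / Nat.gcd g e) = ∑ γ : ZMod g, F (addOrderOf γ) := by
    apply Finset.sum_nbij' (fun e => ((e : ℕ) : ZMod g)) (fun γ => γ.val)
    · intro e _; exact mem_univ _
    · intro γ _; rw [mem_range]; exact ZMod.val_lt γ
    · intro e he; rw [mem_range] at he; exact ZMod.val_cast_of_lt he
    · intro γ _; exact ZMod.natCast_rightInverse γ
    · intro e _
      congr 1
      rw [ZMod.addOrderOf_coe e hg]
  rw [h1]
  have h2 : ∀ γ : ZMod g, addOrderOf γ ∈ g.divisors := by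
    intro γ
    rw [Nat.mem_divisors]
    exact ⟨by have := addOrderOf_dvd_card (x := γ); rwa [ZMod.card] at this, hg⟩
  rw [← Finset.sum_fiberwise_of_maps_to (fun γ _ => h2 γ) (fun γ => F (addOrderOf γ))]
  apply Finset.sum_congr rfl
  intro d hd
  rw [Nat.mem_divisors] at hd
  have hcard : (Finset.filter (fun γ : ZMod g => addOrderOf γ = d) Finset.univ).card
      = Nat.totient d := by
    apply IsAddCyclic.card_addOrderOf_eq_totient
    rw [ZMod.card]
    exact hd.1
  calc ∑ γ ∈ Finset.filter (fun γ : ZMod g => addOrderOf γ = d) Finset.univ, F (addOrderOf γ)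
      = ∑ _γ ∈ Finset.filter (fun γ : ZMod g => addOrderOf γ = d) Finset.univ, F d := by
        apply Finset.sum_congr rfl
        intro γ hγ
        rw [Finset.mem_filter] at hγ
        rw [hγ.2]
    _ = _ := by rw [Finset.sum_const, hcard, smul_eq_mul]

lemma final_reindex {n u : ℕ} (hn : n ≠ 0) (hu : u ≠ 0) :
    ∑ b ∈ n.divisors, ∑ d ∈ (Nat.gcd u b).divisors, Nat.totient d * Nat.lcm u ((n / b) * d)
      = u * ∑ d ∈ n.divisors, d := by
  rw [Finset.sum_sigma']
  have hstep : ∑ x ∈ n.divisors.sigma (fun b => (Nat.gcd u b).divisors),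
      Nat.totient x.2 * Nat.lcm u ((n / x.1) * x.2)
      = ∑ x ∈ n.divisors.sigma (fun b => (Nat.gcd u b).divisors),
      Nat.totient x.2 * Nat.lcm u x.1 := by
    apply Finset.sum_nbij' (fun x => ⟨(n / x.1) * x.2, x.2⟩) (fun x => ⟨(n / x.1) * x.2, x.2⟩)
    · rintro ⟨b, d⟩ hx
      rw [Finset.mem_sigma, Nat.mem_divisors, Nat.mem_divisors] at hx ⊢
      obtain ⟨⟨hbn, -⟩, hdg, hg0⟩ := hx
      have hdb : d ∣ b := hdg.trans (Nat.gcd_dvd_right u b)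
      have hdu : d ∣ u := hdg.trans (Nat.gcd_dvd_left u b)
      refine ⟨⟨?_, hn⟩, ?_, ?_⟩
      · calc (n / b) * d ∣ (n / b) * b := mul_dvd_mul_left _ hdb
          _ = n := Nat.div_mul_cancel hbn
      · exact Nat.dvd_gcd hdu (dvd_mul_left _ _)
      · intro h0
        rw [Nat.gcd_eq_zero_iff] at h0
        exact hu h0.1
    · rintro ⟨B, d⟩ hx
      rw [Finset.mem_sigma, Nat.mem_divisors, Nat.mem_divisors] at hx ⊢
      obtain ⟨⟨hBn, -⟩, hdg, hg0⟩ := hx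
      have hdB : d ∣ B := hdg.trans (Nat.gcd_dvd_right u B)
      have hdu : d ∣ u := hdg.trans (Nat.gcd_dvd_left u B)
      refine ⟨⟨?_, hn⟩, ?_, ?_⟩
      · calc (n / B) * d ∣ (n / B) * B := mul_dvd_mul_left _ hdB
          _ = n := Nat.div_mul_cancel hBn
      · exact Nat.dvd_gcd hdu (dvd_mul_left _ _)
      · intro h0
        rw [Nat.gcd_eq_zero_iff] at h0
        exact hu h0.1
    · rintro ⟨b, d⟩ hx
      rw [Finset.mem_sigma, Nat.mem_divisors, Nat.mem_divisors] at hx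
      obtain ⟨⟨hbn, -⟩, hdg, hg0⟩ := hx
      have hdb : d ∣ b := hdg.trans (Nat.gcd_dvd_right u b)
      have hfst : n / ((n / b) * d) * d = b := by
        rw [← Nat.div_div_eq_div_mul, Nat.div_div_self hbn hn, Nat.div_mul_cancel hdb]
      exact Sigma.ext hfst HEq.rfl
    · rintro ⟨B, d⟩ hx
      rw [Finset.mem_sigma, Nat.mem_divisors, Nat.mem_divisors] at hx
      obtain ⟨⟨hBn, -⟩, hdg, hg0⟩ := hx
      have hdB : d ∣ B := hdg.trans (Nat.gcd_dvd_right u B)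
      have hfst : n / ((n / B) * d) * d = B := by
        rw [← Nat.div_div_eq_div_mul, Nat.div_div_self hBn hn, Nat.div_mul_cancel hdB]
      exact Sigma.ext hfst HEq.rfl
    · rintro ⟨b, d⟩ _
      rfl
  rw [hstep, Finset.sum_sigma]
  have h3 : ∀ B ∈ n.divisors, ∑ d ∈ (Nat.gcd u B).divisors, Nat.totient d * Nat.lcm u B
      = u * B := by
    intro B hB
    rw [← Finset.sum_mul, Nat.sum_totient, Nat.gcd_mul_lcm]
  rw [Finset.sum_congr rfl h3, Finset.mul_sum]

lemma arith (m n : ℕ) (hm : m ≠ 0) (hn : n ≠ 0) :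
    ∑ a ∈ m.divisors, ∑ b ∈ n.divisors, ∑ c ∈ (range b).filter (fun c => b ∣ m / a * c),
        Nat.lcm (m / a) (Nat.lcm (n / n.gcd c) (n / b))
      = (∑ d ∈ m.divisors, d) * (∑ d ∈ n.divisors, d) := by
  have hmain : ∀ u : ℕ, u ≠ 0 →
      ∑ b ∈ n.divisors, ∑ c ∈ (range b).filter (fun c => b ∣ u * c),
        Nat.lcm u (Nat.lcm (n / n.gcd c) (n / b)) = u * ∑ d ∈ n.divisors, d := by
    intro u hu
    have hb' : ∀ b ∈ n.divisors, ∑ c ∈ (range b).filter (fun c => b ∣ u * c),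
        Nat.lcm u (Nat.lcm (n / n.gcd c) (n / b))
        = ∑ d ∈ (Nat.gcd u b).divisors, Nat.totient d * Nat.lcm u ((n / b) * d) := by
      intro b hb
      rw [Nat.mem_divisors] at hb
      have h1 : ∀ c ∈ (range b).filter (fun c => b ∣ u * c),
          Nat.lcm u (Nat.lcm (n / n.gcd c) (n / b)) = Nat.lcm u (n / Nat.gcd b c) := by
        intro c _
        rw [lcm_term_eq hn hb.1]
      rw [Finset.sum_congr rfl h1, inner_reindex hn hb.1 hu,
        totient_grouping _ (Nat.gcd_ne_zero_left hu) (fun d => Nat.lcm u ((n / b) * d))]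
    rw [Finset.sum_congr rfl hb', final_reindex hn hu]
  have step1 : ∀ a ∈ m.divisors,
      ∑ b ∈ n.divisors, ∑ c ∈ (range b).filter (fun c => b ∣ m / a * c),
        Nat.lcm (m / a) (Nat.lcm (n / n.gcd c) (n / b)) = (m / a) * ∑ d ∈ n.divisors, d := by
    intro a ha
    rw [Nat.mem_divisors] at ha
    have hpos : m / a ≠ 0 := by
      have h0 : 0 < a := Nat.pos_of_ne_zero (fun h => hm (by simpa [h] using ha.1))
      exact (Nat.div_pos (Nat.le_of_dvd (Nat.pos_of_ne_zero hm) ha.1) h0).ne'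
    exact hmain (m / a) hpos
  rw [Finset.sum_congr rfl step1,
    Nat.sum_div_divisors m (fun u => u * ∑ d ∈ n.divisors, d), ← Finset.sum_mul]

theorem sum_of_exponents_of_subgroups (m n : ℕ) (hm : 0 < m) (hn : 0 < n) :
    (∑ᶠ H : AddSubgroup (ZMod m × ZMod n), AddMonoid.exponent H) =
      (∑ d ∈ m.divisors, d) * (∑ d ∈ n.divisors, d) := by
  classical
  have hm0 : m ≠ 0 := hm.ne'
  have hn0 : n ≠ 0 := hn.ne'
  set S : Finset ((_ : ℕ) × (_ : ℕ) × ℕ) :=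
    m.divisors.sigma (fun a => n.divisors.sigma
      (fun b => (range b).filter (fun c => b ∣ m / a * c))) with hS
  have hmem : ∀ x : ((_ : ℕ) × (_ : ℕ) × ℕ), x ∈ S ↔
      (x.1 ∣ m ∧ x.2.1 ∣ n ∧ x.2.2 < x.2.1 ∧ x.2.1 ∣ m / x.1 * x.2.2) := by
    rintro ⟨a, b, c⟩
    simp only [hS, Finset.mem_sigma, Finset.mem_filter, Finset.mem_range, Nat.mem_divisors]
    constructor
    · rintro ⟨⟨h1, -⟩, ⟨h2, -⟩, h3, h4⟩
      exact ⟨h1, h2, h3, h4⟩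
    · rintro ⟨h1, h2, h3, h4⟩
      exact ⟨⟨h1, hm0⟩, ⟨h2, hn0⟩, h3, h4⟩
  have hbij : Function.Bijective
      (fun x : {x // x ∈ S} => Hsub m n x.1.1 x.1.2.1 x.1.2.2) := by
    constructor
    · rintro ⟨⟨a, b, c⟩, hx⟩ ⟨⟨a', b', c'⟩, hx'⟩ h
      simp only at h
      rw [hmem] at hx hx'
      obtain ⟨h1, h2, h3⟩ := Hsub_inj hm0 hn0 hx.1 hx.2.1 hx.2.2.1 hx.2.2.2
        hx'.1 hx'.2.1 hx'.2.2.1 hx'.2.2.2 h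
      subst h1; subst h2; subst h3; rfl
    · intro H
      obtain ⟨a, b, c, ⟨ha, hb, hc, hd⟩, hH⟩ := Hsub_surj hm0 hn0 H
      exact ⟨⟨⟨a, b, c⟩, (hmem _).2 ⟨ha, hb, hc, hd⟩⟩, hH⟩
  have h1 : ∑ᶠ (x : {x // x ∈ S}), AddMonoid.exponent (Hsub m n x.1.1 x.1.2.1 x.1.2.2)
      = ∑ᶠ H : AddSubgroup (ZMod m × ZMod n), AddMonoid.exponent H :=
    finsum_eq_of_bijective _ hbij (fun x => rfl)
  rw [← h1, finsum_eq_sum_of_fintype,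
    Finset.sum_coe_sort S (fun x => AddMonoid.exponent (Hsub m n x.1 x.2.1 x.2.2))]
  have h2 : ∑ x ∈ S, AddMonoid.exponent (Hsub m n x.1 x.2.1 x.2.2)
      = ∑ x ∈ S, Nat.lcm (m / x.1) (Nat.lcm (n / n.gcd x.2.2) (n / x.2.1)) := by
    apply Finset.sum_congr rfl
    intro x hx
    rw [hmem] at hx
    exact exp_Hsub hm0 hn0 _ _ _ hx.1 hx.2.1
  rw [h2, hS, Finset.sum_sigma]
  have h3 : ∀ a ∈ m.divisors,
      ∑ x ∈ n.divisors.sigma (fun b => (range b).filter (fun c => b ∣ m / a * c)),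
        Nat.lcm (m / a) (Nat.lcm (n / n.gcd x.2) (n / x.1))
      = ∑ b ∈ n.divisors, ∑ c ∈ (range b).filter (fun c => b ∣ m / a * c),
        Nat.lcm (m / a) (Nat.lcm (n / n.gcd c) (n / b)) := by
    intro a _
    rw [Finset.sum_sigma]
  rw [Finset.sum_congr rfl h3]
  exact arith m n hm0 hn0
end

section
/- For every prime p and integers 0 ≤ a < b, the number of automorphisms of the group ℤ_{p^a} × ℤ_{p^b} equals p^{2a}·φ(p^a)·φ(p^b), and for a = b ≥ 0 it equals p^a·J₂(p^a)·φ(p^a), where J₂(n) = n²·Π_{p ∣ n}(1 - 1/p²) is the Jordan totient of order 2. -/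
/-!
An additive map out of `ℤ_n × ℤ_m` with `n ∣ m` is determined by the images `x`, `y` of the two
generators, the only constraint being `n • x = 0`; so automorphisms correspond to the pairs
`(x, y)` for which `w ↦ w₁ • x + w₂ • y` is bijective.

For `a = b` this map is the `2 × 2` matrix with columns `x`, `y` over the local ring `ℤ_{p^a}`.
It is bijective iff its determinant is a unit, which forces a unit entry in `x`; for each such
`x`, Cramer's rule identifies the admissible `y` with `ℤ_{p^a} × ℤ_{p^a}ˣ`. For `a ≥ 1`
this gives `(p^{2a} - p^{2a-2}) · p^a φ(p^a)` automorphisms, and `p^{2a} - p^{2a-2} = J₂(p^a)`.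

For `a < b` the entry `x₂` is `p^a`-torsion in `ℤ_{p^b}`, hence nilpotent, and so is its image
in `ℤ_{p^a}`. The map is then bijective iff the diagonal entries `x₁`, `y₂` are units, which
leaves `φ(p^a) · p^a · p^a · φ(p^b)` choices.
-/

open Function

section PairMap

variable {A : Type*} [AddCommGroup A]

def pairMap (n m : ℕ) (x y : A) (w : ZMod n × ZMod m) : A := w.1.val • x + w.2.val • y

lemma pairMap_one_zero {n : ℕ} (m : ℕ) {x : A} (y : A) (hx : n • x = 0) :
    pairMap n m x y (1, 0) = x := by
  simp [pairMap, ZMod.val_one_eq_one_mod, ← nsmul_eq_mod_nsmul _ hx]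

lemma pairMap_zero_one (n : ℕ) {m : ℕ} (x : A) {y : A} (hy : m • y = 0) :
    pairMap n m x y (0, 1) = y := by
  simp [pairMap, ZMod.val_one_eq_one_mod, ← nsmul_eq_mod_nsmul _ hy]

variable {n m : ℕ} [NeZero n] [NeZero m]

def pairHom {x y : A} (hx : n • x = 0) (hy : m • y = 0) : ZMod n × ZMod m →+ A where
  toFun := pairMap n m x y
  map_zero' := by simp [pairMap]
  map_add' w w' := by
    simp only [pairMap, Prod.fst_add, Prod.snd_add, ZMod.val_add, ← nsmul_eq_mod_nsmul _ hx,
      ← nsmul_eq_mod_nsmul _ hy, add_nsmul]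
    abel

lemma coe_pairHom {x y : A} (hx : n • x = 0) (hy : m • y = 0) :
    ⇑(pairHom hx hy) = pairMap n m x y := rfl

lemma coe_eq_pairMap (f : ZMod n × ZMod m →+ A) : ⇑f = pairMap n m (f (1, 0)) (f (0, 1)) := by
  funext w
  have hw : w = w.1.val • ((1, 0) : ZMod n × ZMod m) + w.2.val • (0, 1) := by
    ext <;> simp
  conv_lhs => rw [hw]
  rw [map_add, map_nsmul, map_nsmul]
  rfl

noncomputable def addEquivEquivPairs :
    (ZMod n × ZMod m ≃+ A) ≃
      {xy : A × A // n • xy.1 = 0 ∧ m • xy.2 = 0 ∧ Bijective (pairMap n m xy.1 xy.2)} where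
  toFun f := ⟨(f (1, 0), f (0, 1)), by
    refine ⟨?_, ?_, coe_eq_pairMap f.toAddMonoidHom ▸ f.bijective⟩ <;>
    · rw [← map_nsmul]
      simp⟩
  invFun xy := AddEquiv.ofBijective (pairHom xy.2.1 xy.2.2.1) xy.2.2.2
  left_inv f := AddEquiv.ext fun w => (congrFun (coe_eq_pairMap f.toAddMonoidHom) w).symm
  right_inv xy :=
    Subtype.ext <| Prod.ext (pairMap_one_zero m _ xy.2.1) (pairMap_zero_one n _ xy.2.2.1)

end PairMap

section Det

variable {R : Type*} [CommRing R]

def det₂ (x y : R × R) : R := x.1 * y.2 - y.1 * x.2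

lemma det₂_smul_eq (x y w : R × R) : det₂ x y • w = det₂ w y • x + det₂ x w • y := by
  ext <;> simp only [det₂, Prod.smul_fst, Prod.smul_snd, Prod.fst_add, Prod.snd_add, smul_eq_mul]
    <;> ring

lemma bijective_smul_add_smul_iff (x y : R × R) :
    Bijective (fun w : R × R => w.1 • x + w.2 • y) ↔ IsUnit (det₂ x y) := by
  constructor
  · intro h
    obtain ⟨w, hw⟩ := h.2 (1, 0)
    obtain ⟨w', hw'⟩ := h.2 (0, 1)
    simp only [Prod.ext_iff, Prod.fst_add, Prod.snd_add, Prod.smul_fst, Prod.smul_snd,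
      smul_eq_mul] at hw hw'
    refine .of_mul_eq_one (det₂ w w') ?_
    unfold det₂
    linear_combination (w'.1 * x.2 + w'.2 * y.2) * hw.1 + hw'.2 - (w.1 * x.2 + w.2 * y.2) * hw'.1
  · rintro ⟨d, hd⟩
    have hinv : (↑d⁻¹ : R) * det₂ x y = 1 := by rw [← hd, Units.inv_mul]
    refine bijective_iff_has_inverse.2
      ⟨fun t => (↑d⁻¹ : R) • (det₂ t y, det₂ x t), ?_, ?_⟩
    · intro w
      unfold det₂ at hinv ⊢
      ext <;> simp only [Prod.smul_fst, Prod.smul_snd, Prod.fst_add, Prod.snd_add, smul_eq_mul]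
      · linear_combination w.1 * hinv
      · linear_combination w.2 * hinv
    · intro t
      simp only [smul_eq_mul, Prod.smul_mk]
      rw [mul_smul, mul_smul, ← smul_add, ← det₂_smul_eq, smul_smul, hinv, one_smul]

lemma exists_det₂_eq_one {x : R × R} (hx : IsUnit x.1 ∨ IsUnit x.2) :
    ∃ z, det₂ x z = 1 := by
  rcases hx with ⟨u, hu⟩ | ⟨u, hu⟩
  · exact ⟨(0, ↑u⁻¹), by simp [det₂, ← hu]⟩
  · exact ⟨(-↑u⁻¹, 0), by simp [det₂, ← hu]⟩

/-- By Cramer's rule, `(det₂ y z, det₂ x y)` are the coordinates of `y` in the basis `x, z`. -/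
noncomputable def unitDet₂Equiv (x z : R × R) (hxz : det₂ x z = 1) :
    {y : R × R // IsUnit (det₂ x y)} ≃ R × Rˣ where
  toFun y := (det₂ y z, y.2.unit)
  invFun cu := ⟨cu.1 • x + (cu.2 : R) • z, by
    convert cu.2.isUnit
    unfold det₂ at hxz ⊢
    simp only [Prod.fst_add, Prod.snd_add, Prod.smul_fst, Prod.smul_snd, smul_eq_mul]
    linear_combination (cu.2 : R) * hxz⟩
  left_inv y := by
    ext1
    simpa [hxz] using (det₂_smul_eq x z y).symm
  right_inv cu := by
    unfold det₂ at hxz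
    ext
    · simp only [det₂, Prod.fst_add, Prod.snd_add, Prod.smul_fst, Prod.smul_snd, smul_eq_mul]
      linear_combination cu.1 * hxz
    · simp only [IsUnit.unit_spec, det₂, Prod.fst_add, Prod.snd_add, Prod.smul_fst,
        Prod.smul_snd, smul_eq_mul]
      linear_combination (cu.2 : R) * hxz

lemma isUnit_or_isUnit_of_isUnit_det₂ [IsLocalRing R] {x y : R × R} (h : IsUnit (det₂ x y)) :
    IsUnit x.1 ∨ IsUnit x.2 := by
  by_contra! hx
  have hx₁ : x.1 ∈ IsLocalRing.maximalIdeal R := hx.1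
  have hx₂ : x.2 ∈ IsLocalRing.maximalIdeal R := hx.2
  exact (Ideal.sub_mem _ (Ideal.mul_mem_right _ _ hx₁) (Ideal.mul_mem_left _ _ hx₂) :
    det₂ x y ∈ _) h

end Det

section Card

variable (M : Type*) [Monoid M]

lemma Nat.card_isUnit : Nat.card {x : M // IsUnit x} = Nat.card Mˣ :=
  (Nat.card_congr Submonoid.unitsTypeEquivIsUnitSubmonoid.toEquiv).symm

variable [Finite M]

lemma Nat.card_not_isUnit : Nat.card {x : M // ¬IsUnit x} = Nat.card M - Nat.card Mˣ := by
  classical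
  rw [← Nat.card_congr (Equiv.sumCompl fun x : M => IsUnit x), Nat.card_sum, Nat.card_isUnit,
    Nat.add_sub_cancel_left]

lemma Nat.card_isUnit_or_isUnit :
    Nat.card {x : M × M // IsUnit x.1 ∨ IsUnit x.2} =
      Nat.card M ^ 2 - (Nat.card M - Nat.card Mˣ) ^ 2 := by
  classical
  have hcompl : Nat.card {x : M × M // ¬(IsUnit x.1 ∨ IsUnit x.2)} =
      (Nat.card M - Nat.card Mˣ) ^ 2 := by
    rw [Nat.card_congr ((Equiv.subtypeEquivRight fun x : M × M => not_or).trans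
      (Equiv.subtypeProdEquivProd (p := fun a => ¬IsUnit a) (q := fun a => ¬IsUnit a))),
      Nat.card_prod, Nat.card_not_isUnit, sq]
  rw [← hcompl, sq, ← Nat.card_prod, ← Nat.card_congr (Equiv.sumCompl fun x : M × M =>
    IsUnit x.1 ∨ IsUnit x.2), Nat.card_sum, Nat.add_sub_cancel]

end Card

theorem card_isUnit_det₂ (R : Type*) [CommRing R] [IsLocalRing R] [Finite R] :
    Nat.card {xy : (R × R) × (R × R) // IsUnit (det₂ xy.1 xy.2)} =
      (Nat.card R ^ 2 - (Nat.card R - Nat.card Rˣ) ^ 2) * (Nat.card R * Nat.card Rˣ) := by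
  have e : {xy : (R × R) × (R × R) // IsUnit (det₂ xy.1 xy.2)} ≃
      {x : R × R // IsUnit x.1 ∨ IsUnit x.2} × (R × Rˣ) :=
    (Equiv.subtypeProdEquivSigmaSubtype fun x y => IsUnit (det₂ x y)).trans <|
      (Equiv.sigmaSubtypeEquivOfSubset _ _ fun _ y =>
        isUnit_or_isUnit_of_isUnit_det₂ y.2).symm.trans <|
      (Equiv.sigmaCongrRight fun x : {x : R × R // IsUnit x.1 ∨ IsUnit x.2} =>
        unitDet₂Equiv x.1 _ (exists_det₂_eq_one x.2).choose_spec).trans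
      (Equiv.sigmaEquivProd _ _)
  rw [Nat.card_congr e, Nat.card_prod, Nat.card_prod, Nat.card_isUnit_or_isUnit]

namespace ZMod

lemma nsmul_eq_zero_of_dvd {n k : ℕ} (h : n ∣ k) (z : ZMod n) : k • z = 0 := by
  rw [nsmul_eq_mul, (natCast_eq_zero_iff k n).2 h, zero_mul]

lemma card_nsmul_eq_zero {n m : ℕ} [NeZero m] (h : n ∣ m) :
    Nat.card {z : ZMod m // n • z = 0} = n := by
  have := IsAddCyclic.card_nsmulAddMonoidHom_ker (ZMod m) n
  rwa [Nat.card_zmod, Nat.gcd_eq_right h] at this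

variable {p : ℕ}

lemma isNilpotent_of_not_isUnit (hp : p.Prime) {k : ℕ} {x : ZMod (p ^ k)} (hx : ¬IsUnit x) :
    IsNilpotent x := by
  have : NeZero (p ^ k) := ⟨pow_ne_zero k hp.ne_zero⟩
  obtain ⟨c, hc⟩ : p ∣ x.val := by
    by_contra h
    refine hx ?_
    rw [← natCast_zmod_val x, isUnit_iff_coprime]
    exact (Nat.coprime_comm.1 (hp.coprime_iff_not_dvd.2 h)).pow_right k
  refine ⟨k, ?_⟩
  rw [← natCast_zmod_val x, hc, ← Nat.cast_pow, mul_pow, Nat.cast_mul, natCast_self, zero_mul]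

lemma isNilpotent_of_nsmul_eq_zero (hp : p.Prime) {a b : ℕ} (hab : a < b) {x : ZMod (p ^ b)}
    (hx : p ^ a • x = 0) : IsNilpotent x := by
  refine isNilpotent_of_not_isUnit hp fun hu => ?_
  rw [nsmul_eq_mul, hu.mul_left_eq_zero, natCast_eq_zero_iff,
    Nat.pow_dvd_pow_iff_le_right hp.one_lt] at hx
  omega

lemma isLocalRing_prime_pow (hp : p.Prime) {k : ℕ} (hk : 0 < k) : IsLocalRing (ZMod (p ^ k)) :=
  have : Nontrivial (ZMod (p ^ k)) := nontrivial_iff.2 (Nat.one_lt_pow hk.ne' hp.one_lt).ne'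
  .of_nonunits_add fun x y hx hy =>
    ((Commute.all x y).isNilpotent_add (isNilpotent_of_not_isUnit hp hx)
      (isNilpotent_of_not_isUnit hp hy)).not_isUnit

end ZMod

section ProdZMod

variable {n m : ℕ}

lemma card_addAut_eq_card_pairs [NeZero n] [NeZero m] (hnm : n ∣ m) :
    Nat.card (AddAut (ZMod n × ZMod m)) =
      Nat.card {xy : (ZMod n × ZMod m) × (ZMod n × ZMod m) //
        n • xy.1.2 = 0 ∧ Bijective (pairMap n m xy.1 xy.2)} := by
  refine Nat.card_congr (addEquivEquivPairs.trans (Equiv.subtypeEquivRight fun xy => ?_))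
  have h2 : m • xy.2 = 0 :=
    Prod.ext (ZMod.nsmul_eq_zero_of_dvd hnm _) (ZMod.nsmul_eq_zero_of_dvd dvd_rfl _)
  simp [Prod.ext_iff, h2]

lemma pairMap_fst [NeZero n] [NeZero m] (hnm : n ∣ m) (x y w : ZMod n × ZMod m) :
    (pairMap n m x y w).1 = w.1 * x.1 + ZMod.castHom hnm (ZMod n) w.2 * y.1 := by
  rw [pairMap, Prod.fst_add, Prod.smul_fst, Prod.smul_fst, nsmul_eq_mul, nsmul_eq_mul,
    ZMod.natCast_zmod_val, ZMod.castHom_apply, ZMod.cast_eq_val]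

lemma pairMap_snd [NeZero m] (x y w : ZMod n × ZMod m) :
    (pairMap n m x y w).2 = (w.1.val : ZMod m) * x.2 + w.2 * y.2 := by
  rw [pairMap, Prod.snd_add, Prod.smul_snd, Prod.smul_snd, nsmul_eq_mul, nsmul_eq_mul,
    ZMod.natCast_zmod_val]

lemma pairMap_self [NeZero n] (x y : ZMod n × ZMod n) :
    pairMap n n x y = fun w => w.1 • x + w.2 • y := by
  funext w
  rw [pairMap, ← Nat.cast_smul_eq_nsmul (ZMod n), ← Nat.cast_smul_eq_nsmul (ZMod n),
    ZMod.natCast_zmod_val, ZMod.natCast_zmod_val]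

theorem card_addAut_zmod_prod_self [NeZero n] [IsLocalRing (ZMod n)] :
    Nat.card (AddAut (ZMod n × ZMod n)) = (n ^ 2 - (n - n.totient) ^ 2) * (n * n.totient) := by
  have h := card_isUnit_det₂ (ZMod n)
  rw [Nat.card_zmod, Nat.card_eq_fintype_card (α := (ZMod n)ˣ), ZMod.card_units_eq_totient] at h
  rw [← h, card_addAut_eq_card_pairs dvd_rfl]
  refine Nat.card_congr (Equiv.subtypeEquivRight fun xy => ?_)
  rw [pairMap_self, bijective_smul_add_smul_iff]
  simp

end ProdZMod

section PrimePower

variable {p : ℕ}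

lemma isUnit_of_surjective_pairMap (hp : p.Prime) {a b : ℕ} (hab : a < b)
    {x y : ZMod (p ^ a) × ZMod (p ^ b)} (hx : p ^ a • x.2 = 0)
    (hf : Surjective (pairMap (p ^ a) (p ^ b) x y)) : IsUnit x.1 ∧ IsUnit y.2 := by
  have : NeZero (p ^ a) := ⟨pow_ne_zero a hp.ne_zero⟩
  have : NeZero (p ^ b) := ⟨pow_ne_zero b hp.ne_zero⟩
  have hnm : p ^ a ∣ p ^ b := pow_dvd_pow p hab.le
  set π := ZMod.castHom hnm (ZMod (p ^ a))
  have hx₂ : IsNilpotent x.2 := ZMod.isNilpotent_of_nsmul_eq_zero hp hab hx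
  obtain ⟨w', hw'⟩ := hf (0, 1)
  obtain ⟨w, hw⟩ := hf (1, 0)
  have hy : IsUnit y.2 := by
    have h : w'.2 * y.2 = 1 - (w'.1.val : ZMod (p ^ b)) * x.2 := by
      linear_combination (pairMap_snd x y w').symm.trans (congrArg Prod.snd hw')
    exact isUnit_of_mul_isUnit_right
      (h ▸ ((Commute.all _ _).isNilpotent_mul_left hx₂).isUnit_one_sub)
  have hw₂ : IsNilpotent w.2 := by
    have h : w.2 * y.2 = -((w.1.val : ZMod (p ^ b)) * x.2) := by
      linear_combination (pairMap_snd x y w).symm.trans (congrArg Prod.snd hw)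
    rw [← hy.isNilpotent_mul_unit_of_commute_iff (Commute.all _ _), h]
    exact ((Commute.all _ _).isNilpotent_mul_left hx₂).neg
  have h : w.1 * x.1 = 1 - π w.2 * y.1 := by
    linear_combination (pairMap_fst hnm x y w).symm.trans (congrArg Prod.fst hw)
  exact ⟨isUnit_of_mul_isUnit_right
    (h ▸ ((Commute.all _ _).isNilpotent_mul_right (hw₂.map π)).isUnit_one_sub), hy⟩

lemma injective_pairMap_of_isUnit (hp : p.Prime) {a b : ℕ} (hab : a < b)
    {x y : ZMod (p ^ a) × ZMod (p ^ b)} (hx : p ^ a • x.2 = 0) (hx₁ : IsUnit x.1)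
    (hy₂ : IsUnit y.2) : Injective (pairMap (p ^ a) (p ^ b) x y) := by
  have : NeZero (p ^ a) := ⟨pow_ne_zero a hp.ne_zero⟩
  have : NeZero (p ^ b) := ⟨pow_ne_zero b hp.ne_zero⟩
  have hnm : p ^ a ∣ p ^ b := pow_dvd_pow p hab.le
  set π := ZMod.castHom hnm (ZMod (p ^ a))
  have hπx₂ : IsNilpotent (π x.2) := (ZMod.isNilpotent_of_nsmul_eq_zero hp hab hx).map π
  obtain ⟨v, hv⟩ := hy₂
  have hpx : p ^ a • x = 0 := Prod.ext (ZMod.nsmul_eq_zero_of_dvd dvd_rfl _) hx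
  have hpy : p ^ b • y = 0 :=
    Prod.ext (ZMod.nsmul_eq_zero_of_dvd hnm _) (ZMod.nsmul_eq_zero_of_dvd dvd_rfl _)
  rw [← coe_pairHom hpx hpy, injective_iff_map_eq_zero]
  intro w hw
  have h₁ : w.1 * x.1 + π w.2 * y.1 = 0 := by
    rw [← pairMap_fst hnm]; exact congrArg Prod.fst hw
  have h₂ : (w.1.val : ZMod (p ^ b)) * x.2 + w.2 * v = 0 := by
    rw [hv, ← pairMap_snd]; exact congrArg Prod.snd hw
  have hw₂ : w.2 = -((w.1.val : ZMod (p ^ b)) * x.2 * ↑v⁻¹) := by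
    linear_combination (↑v⁻¹ : ZMod (p ^ b)) * h₂ - w.2 * v.mul_inv
  have hπw₂ : π w.2 = -(w.1 * π x.2 * π ↑v⁻¹) := by
    rw [hw₂, map_neg, map_mul, map_mul, map_natCast, ZMod.natCast_zmod_val]
  have hw₁ : w.1 = 0 := by
    have h : w.1 * (x.1 + -(π x.2 * π ↑v⁻¹ * y.1)) = 0 := by
      rw [hπw₂] at h₁
      linear_combination h₁
    refine (IsUnit.mul_left_eq_zero ?_).1 h
    exact ((Commute.all _ _).isNilpotent_mul_right
      ((Commute.all _ _).isNilpotent_mul_right hπx₂)).neg.isUnit_add_left_of_commute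
      hx₁ (Commute.all _ _)
  ext
  · exact hw₁
  · simp [hw₂, hw₁]

theorem bijective_pairMap_iff_of_lt (hp : p.Prime) {a b : ℕ} (hab : a < b)
    {x y : ZMod (p ^ a) × ZMod (p ^ b)} (hx : p ^ a • x.2 = 0) :
    Bijective (pairMap (p ^ a) (p ^ b) x y) ↔ IsUnit x.1 ∧ IsUnit y.2 :=
  have : NeZero (p ^ a) := ⟨pow_ne_zero a hp.ne_zero⟩
  have : NeZero (p ^ b) := ⟨pow_ne_zero b hp.ne_zero⟩
  ⟨fun hf => isUnit_of_surjective_pairMap hp hab hx hf.2, fun h =>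
    Finite.injective_iff_bijective.1 (injective_pairMap_of_isUnit hp hab hx h.1 h.2)⟩

theorem card_addAut_zmod_prime_pow_prod_of_lt (hp : p.Prime) {a b : ℕ} (hab : a < b) :
    Nat.card (AddAut (ZMod (p ^ a) × ZMod (p ^ b))) =
      (p ^ a).totient * p ^ a * (p ^ a * (p ^ b).totient) := by
  have : NeZero (p ^ a) := ⟨pow_ne_zero a hp.ne_zero⟩
  have : NeZero (p ^ b) := ⟨pow_ne_zero b hp.ne_zero⟩
  have e : {xy : (ZMod (p ^ a) × ZMod (p ^ b)) × (ZMod (p ^ a) × ZMod (p ^ b)) //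
        p ^ a • xy.1.2 = 0 ∧ Bijective (pairMap (p ^ a) (p ^ b) xy.1 xy.2)} ≃
      ({u : ZMod (p ^ a) // IsUnit u} × {z : ZMod (p ^ b) // p ^ a • z = 0}) ×
        (ZMod (p ^ a) × {v : ZMod (p ^ b) // IsUnit v}) :=
    (Equiv.subtypeEquivRight fun xy =>
      (and_congr_right (bijective_pairMap_iff_of_lt hp hab)).trans (by tauto)).trans <|
    Equiv.subtypeProdEquivProd.trans <| Equiv.prodCongr Equiv.subtypeProdEquivProd <|
      ((Equiv.prodComm _ _).subtypeEquiv fun _ => Iff.rfl).trans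
        Equiv.prodSubtypeFstEquivSubtypeProd |>.trans (Equiv.prodComm _ _)
  rw [card_addAut_eq_card_pairs (pow_dvd_pow p hab.le), Nat.card_congr e]
  simp only [Nat.card_prod, Nat.card_isUnit, Nat.card_zmod, ZMod.card_nsmul_eq_zero
    (pow_dvd_pow p hab.le), Nat.card_eq_fintype_card (α := (ZMod _)ˣ), ZMod.card_units_eq_totient]

theorem card_addAut_zmod_prime_pow_prod_self (hp : p.Prime) (a : ℕ) :
    Nat.card (AddAut (ZMod (p ^ a) × ZMod (p ^ a))) =
      ((p ^ a) ^ 2 - (p ^ a - (p ^ a).totient) ^ 2) * (p ^ a * (p ^ a).totient) := by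
  rcases a.eq_zero_or_pos with rfl | ha
  · have : Subsingleton (ZMod (p ^ 0)) := by rw [pow_zero]; infer_instance
    simp only [pow_zero, Nat.totient_one, Nat.sub_self, one_pow, zero_pow two_ne_zero,
      Nat.sub_zero, mul_one]
    exact Nat.card_eq_one_iff_unique.2
      ⟨⟨fun f g => AddEquiv.ext fun _ => Subsingleton.elim _ _⟩, ⟨AddEquiv.refl _⟩⟩
  · have : NeZero (p ^ a) := ⟨pow_ne_zero a hp.ne_zero⟩
    have := ZMod.isLocalRing_prime_pow hp ha
    exact card_addAut_zmod_prod_self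

lemma sq_sub_sq_sub_totient_prime_pow (hp : p.Prime) (a : ℕ) :
    ((((p ^ a) ^ 2 - (p ^ a - (p ^ a).totient) ^ 2 : ℕ)) : ℚ) =
      ((p : ℚ) ^ a) ^ 2 * ∏ q ∈ (p ^ a).primeFactors, (1 - 1 / (q : ℚ) ^ 2) := by
  rcases a with _ | a
  · simp
  have hsub : p ^ (a + 1) - (p ^ (a + 1)).totient = p ^ a := by
    rw [Nat.totient_prime_pow_succ hp, pow_succ, ← Nat.mul_sub, Nat.sub_sub_self hp.one_le,
      mul_one]
  have hle : (p ^ a) ^ 2 ≤ (p ^ (a + 1)) ^ 2 :=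
    Nat.pow_le_pow_left (Nat.pow_le_pow_right hp.pos a.le_succ) 2
  rw [hsub, Nat.cast_sub hle, Nat.primeFactors_prime_pow a.succ_ne_zero hp,
    Finset.prod_singleton]
  have : (p : ℚ) ≠ 0 := Nat.cast_ne_zero.2 hp.ne_zero
  push_cast
  field_simp
  ring

end PrimePower

theorem automorphism_count_prime_powers (p : ℕ) (hp : p.Prime) (a b : ℕ) :
    (a < b →
      Nat.card (AddAut (ZMod (p ^ a) × ZMod (p ^ b))) =
        p ^ (2 * a) * Nat.totient (p ^ a) * Nat.totient (p ^ b)) ∧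
    (a = b →
      (Nat.card (AddAut (ZMod (p ^ a) × ZMod (p ^ b))) : ℚ) =
        (p : ℚ) ^ a *
          (((p : ℚ) ^ a) ^ 2 * ∏ q ∈ (p ^ a).primeFactors, (1 - 1 / (q : ℚ) ^ 2)) *
          (Nat.totient (p ^ a) : ℚ)) := by
  refine ⟨fun hab => ?_, fun hab => ?_⟩
  · rw [card_addAut_zmod_prime_pow_prod_of_lt hp hab]
    ring
  · subst hab
    rw [card_addAut_zmod_prime_pow_prod_self hp, Nat.cast_mul,
      sq_sub_sq_sub_totient_prime_pow hp]
    push_cast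
    ring
end

section
/- For every positive integer n and k ≥ 1, the number of subgroups of index n in ℤ^k equals Σ_{d₁d₂⋯d_k = n} d₁^0 d₂^1 ⋯ d_k^{k-1}, the sum being over ordered k-tuples of positive integers with product n. -/
/-!
A subgroup `H` of `ℤ × B` of finite index is determined by three data: the index `c` of its
projection `cℤ` to `ℤ`, its intersection `H'` with `B`, and the class modulo `H'` of the
`B`-coordinate of any element of `H` lying over `c`; conversely every such triple occurs, and
`[ℤ × B : H] = c · [B : H']`. Writing `a_G(n)` for the number of subgroups of index `n` of `G`,
this gives `a_{ℤ × B}(n) = ∑_{c ∣ n} (n / c) · a_B(n / c)`, the factor `n / c` counting the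
classes in `B ⧸ H'`. Iterating along `ℤ^(k+1) = ℤ × ℤ^k` gives exactly the recursion satisfied
by `∑_{d₁ ⋯ d_k = n} ∏ dᵢ^(i-1)` when the first factor `d₁ = c` is split off.
-/

open AddSubgroup

theorem Nat.div_ne_zero_of_mem_divisors {n c : ℕ} (hc : c ∈ n.divisors) : n / c ≠ 0 :=
  (Nat.div_pos (Nat.divisor_le hc) (Nat.pos_of_mem_divisors hc)).ne'

theorem AddSubgroup.index_eq_index_map_fst_mul_index_comap_inr {A B : Type*} [AddCommGroup A]
    [AddCommGroup B] (H : AddSubgroup (A × B)) :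
    H.index = (H.map (AddMonoidHom.fst A B)).index * (H.comap (AddMonoidHom.inr A B)).index := by
  have hrange : (AddMonoidHom.inr A B).range = (AddMonoidHom.fst A B).ker := by
    ext ⟨a, b⟩
    simp [AddMonoidHom.ker_fst, AddSubgroup.mem_prod, eq_comm]
  have hmap : (H.map (AddMonoidHom.fst A B)).index = (H ⊔ (AddMonoidHom.fst A B).ker).index := by
    rw [index_map, (AddMonoidHom.fst A B).range_eq_top_of_surjective Prod.fst_surjective,
      index_top, mul_one]
  rw [hmap, index_comap, hrange, ← relIndex_sup_left, mul_comm, relIndex_mul_index le_sup_left]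

theorem Int.zmultiples_index (M : AddSubgroup ℤ) : zmultiples (M.index : ℤ) = M := by
  obtain ⟨a, rfl⟩ := Int.subgroup_cyclic M
  rw [← zmultiples_eq_closure, Int.index_zmultiples, Int.zmultiples_natAbs]

section LiftSubgroup

variable {B : Type*} [AddCommGroup B]

def liftSubgroup (c : ℕ) (H' : AddSubgroup B) (β : B ⧸ H') : AddSubgroup (ℤ × B) where
  carrier := {p | ∃ t : ℤ, p.1 = t * c ∧ (p.2 : B ⧸ H') = t • β}
  zero_mem' := ⟨0, by simp⟩
  add_mem' := by
    rintro _ _ ⟨s, hs₁, hs₂⟩ ⟨t, ht₁, ht₂⟩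
    exact ⟨s + t, by simp [hs₁, ht₁, add_mul], by simp [hs₂, ht₂, add_smul]⟩
  neg_mem' := by
    rintro _ ⟨t, ht₁, ht₂⟩
    exact ⟨-t, by simp [ht₁], by simp [ht₂]⟩

variable {c : ℕ} {H' : AddSubgroup B} {β : B ⧸ H'}

theorem mem_liftSubgroup {p : ℤ × B} :
    p ∈ liftSubgroup c H' β ↔ ∃ t : ℤ, p.1 = t * c ∧ (p.2 : B ⧸ H') = t • β :=
  Iff.rfl

theorem map_fst_liftSubgroup :
    (liftSubgroup c H' β).map (AddMonoidHom.fst ℤ B) = zmultiples (c : ℤ) := by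
  ext x
  simp only [mem_map, mem_liftSubgroup, Int.mem_zmultiples_iff, AddMonoidHom.coe_fst]
  constructor
  · rintro ⟨p, ⟨t, ht, -⟩, rfl⟩
    exact ⟨t, by rw [ht, mul_comm]⟩
  · rintro ⟨t, rfl⟩
    obtain ⟨b, rfl⟩ := QuotientAddGroup.mk_surjective β
    exact ⟨(c * t, t • b), ⟨t, mul_comm _ _, by simp⟩, rfl⟩

theorem comap_inr_liftSubgroup (hc : c ≠ 0) :
    (liftSubgroup c H' β).comap (AddMonoidHom.inr ℤ B) = H' := by
  ext y
  simp only [mem_comap, AddMonoidHom.inr_apply, mem_liftSubgroup]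
  constructor
  · rintro ⟨t, ht, hy⟩
    obtain rfl : t = 0 := by simpa [hc] using ht.symm
    simpa using hy
  · intro hy
    exact ⟨0, by simp, by simpa⟩

theorem index_liftSubgroup (hc : c ≠ 0) : (liftSubgroup c H' β).index = c * H'.index := by
  rw [index_eq_index_map_fst_mul_index_comap_inr, map_fst_liftSubgroup,
    comap_inr_liftSubgroup hc, Int.index_zmultiples, Int.natAbs_natCast]

theorem index_map_fst_liftSubgroup :
    ((liftSubgroup c H' β).map (AddMonoidHom.fst ℤ B)).index = c := by
  rw [map_fst_liftSubgroup, Int.index_zmultiples, Int.natAbs_natCast]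

theorem natCast_mk_mem_liftSubgroup_iff (hc : c ≠ 0) {y : B} :
    ((c : ℤ), y) ∈ liftSubgroup c H' β ↔ (y : B ⧸ H') = β := by
  rw [mem_liftSubgroup]
  constructor
  · rintro ⟨t, ht, hy⟩
    obtain rfl : t = 1 := by
      have : (t - 1) * c = 0 := by simp only at ht; linarith
      simpa [hc, sub_eq_zero] using this
    simpa using hy
  · intro hy
    exact ⟨1, by simp, by simpa⟩

theorem exists_eq_liftSubgroup (H : AddSubgroup (ℤ × B)) :
    ∃ β, H = liftSubgroup (H.map (AddMonoidHom.fst ℤ B)).index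
      (H.comap (AddMonoidHom.inr ℤ B)) β := by
  set c := (H.map (AddMonoidHom.fst ℤ B)).index
  have hfst : H.map (AddMonoidHom.fst ℤ B) = zmultiples (c : ℤ) :=
    (Int.zmultiples_index _).symm
  obtain ⟨⟨x, b⟩, hb, hx⟩ := (mem_map (f := AddMonoidHom.fst ℤ B)).mp
    (hfst ▸ mem_zmultiples (c : ℤ))
  simp only [AddMonoidHom.coe_fst] at hx
  subst hx
  refine ⟨b, ?_⟩
  ext ⟨x, y⟩
  rw [mem_liftSubgroup]
  constructor
  · intro hxy
    obtain ⟨t, rfl⟩ := Int.mem_zmultiples_iff.mp (hfst ▸ mem_map_of_mem _ hxy)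
    refine ⟨t, mul_comm _ _, ?_⟩
    have hsub : ((c : ℤ) * t, y) - t • ((c : ℤ), b) = (0, y - t • b) := by
      ext <;> simp [mul_comm]
    have hmem : y - t • b ∈ H.comap (AddMonoidHom.inr ℤ B) := by
      rw [mem_comap, AddMonoidHom.inr_apply, ← hsub]
      exact sub_mem hxy (zsmul_mem hb t)
    rw [← QuotientAddGroup.mk_zsmul, QuotientAddGroup.eq_iff_sub_mem]
    exact hmem
  · rintro ⟨t, hx, hy⟩
    simp only at hx
    rw [← QuotientAddGroup.mk_zsmul, QuotientAddGroup.eq_iff_sub_mem, mem_comap,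
      AddMonoidHom.inr_apply] at hy
    have hsum : (x, y) = t • ((c : ℤ), b) + (0, y - t • b) := by
      ext <;> simp [hx]
    rw [hsum]
    exact add_mem (zsmul_mem hb t) hy

theorem liftSubgroup_injective (hc : c ≠ 0) : Function.Injective (liftSubgroup c H') := by
  intro β₁ β₂ h
  obtain ⟨b, rfl⟩ := QuotientAddGroup.mk_surjective β₁
  rw [← natCast_mk_mem_liftSubgroup_iff hc, ← h, natCast_mk_mem_liftSubgroup_iff hc]

end LiftSubgroup

section Counting

variable {B : Type*} [AddCommGroup B]

def liftSubgroupOfIndex (n : ℕ)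
    (x : Σ c : n.divisors, Σ H' : {H' : AddSubgroup B // H'.index = n / c}, B ⧸ H'.1) :
    {H : AddSubgroup (ℤ × B) // H.index = n} :=
  ⟨liftSubgroup x.1 x.2.1 x.2.2, by
    rw [index_liftSubgroup (Nat.pos_of_mem_divisors x.1.2).ne', x.2.1.2,
      Nat.mul_div_cancel' (Nat.dvd_of_mem_divisors x.1.2)]⟩

theorem liftSubgroupOfIndex_injective (n : ℕ) :
    Function.Injective (liftSubgroupOfIndex (B := B) n) := by
  rintro ⟨⟨c₁, hc₁⟩, ⟨H₁, _⟩, β₁⟩ ⟨⟨c₂, _⟩, ⟨H₂, _⟩, β₂⟩ h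
  replace h : liftSubgroup c₁ H₁ β₁ = liftSubgroup c₂ H₂ β₂ := congrArg Subtype.val h
  have hc₁ : c₁ ≠ 0 := (Nat.pos_of_mem_divisors hc₁).ne'
  obtain rfl : c₁ = c₂ := by
    simpa only [index_map_fst_liftSubgroup] using
      congrArg (fun H => (H.map (AddMonoidHom.fst ℤ B)).index) h
  obtain rfl : H₁ = H₂ := by
    simpa only [comap_inr_liftSubgroup hc₁] using congrArg (comap (AddMonoidHom.inr ℤ B)) h
  obtain rfl := liftSubgroup_injective hc₁ h
  rfl

theorem liftSubgroupOfIndex_surjective {n : ℕ} (hn : n ≠ 0) :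
    Function.Surjective (liftSubgroupOfIndex (B := B) n) := by
  rintro ⟨H, hH⟩
  obtain ⟨β, hβ⟩ := exists_eq_liftSubgroup H
  have hn' : n = (H.map (AddMonoidHom.fst ℤ B)).index * (H.comap (AddMonoidHom.inr ℤ B)).index :=
    hH ▸ index_eq_index_map_fst_mul_index_comap_inr H
  have hc : (H.map (AddMonoidHom.fst ℤ B)).index ∈ n.divisors :=
    Nat.mem_divisors.mpr ⟨Dvd.intro _ hn'.symm, hn⟩
  have hH' :
      (H.comap (AddMonoidHom.inr ℤ B)).index = n / (H.map (AddMonoidHom.fst ℤ B)).index := by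
    rw [hn', Nat.mul_div_cancel_left _ (Nat.pos_of_mem_divisors hc)]
  exact ⟨⟨⟨_, hc⟩, ⟨_, hH'⟩, β⟩, Subtype.ext hβ.symm⟩

noncomputable def subgroupsOfIndexProdEquiv {n : ℕ} (hn : n ≠ 0) :
    (Σ c : n.divisors, Σ H' : {H' : AddSubgroup B // H'.index = n / c}, B ⧸ H'.1) ≃
      {H : AddSubgroup (ℤ × B) // H.index = n} :=
  Equiv.ofBijective _ ⟨liftSubgroupOfIndex_injective n, liftSubgroupOfIndex_surjective hn⟩

theorem card_sigma_quotient_of_index {m : ℕ} (hm : m ≠ 0)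
    [Finite {H : AddSubgroup B // H.index = m}] :
    Nat.card (Σ H : {H : AddSubgroup B // H.index = m}, B ⧸ H.1) =
      m * Nat.card {H : AddSubgroup B // H.index = m} := by
  have (H : {H : AddSubgroup B // H.index = m}) : H.1.FiniteIndex := ⟨by rw [H.2]; exact hm⟩
  have : Fintype {H : AddSubgroup B // H.index = m} := Fintype.ofFinite _
  rw [Nat.card_sigma, Nat.card_eq_fintype_card, Finset.sum_congr rfl fun H _ =>
    (H.2 ▸ H.1.index_eq_card).symm]
  simp [mul_comm]

variable (hB : ∀ m ≠ 0, Finite {H : AddSubgroup B // H.index = m})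
include hB

theorem finite_subgroups_index_prod {n : ℕ} (hn : n ≠ 0) :
    Finite {H : AddSubgroup (ℤ × B) // H.index = n} :=
  have := fun c : n.divisors => hB _ (Nat.div_ne_zero_of_mem_divisors c.2)
  have : ∀ (c : n.divisors) (H : {H' : AddSubgroup B // H'.index = n / c}), H.1.FiniteIndex :=
    fun c H => ⟨by rw [H.2]; exact Nat.div_ne_zero_of_mem_divisors c.2⟩
  Finite.of_equiv _ (subgroupsOfIndexProdEquiv hn)

theorem card_subgroups_index_prod {n : ℕ} (hn : n ≠ 0) :
    Nat.card {H : AddSubgroup (ℤ × B) // H.index = n} =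
      ∑ c ∈ n.divisors, n / c * Nat.card {H : AddSubgroup B // H.index = n / c} := by
  have := fun c : n.divisors => hB _ (Nat.div_ne_zero_of_mem_divisors c.2)
  have : ∀ (c : n.divisors) (H : {H' : AddSubgroup B // H'.index = n / c}), H.1.FiniteIndex :=
    fun c H => ⟨by rw [H.2]; exact Nat.div_ne_zero_of_mem_divisors c.2⟩
  rw [← Nat.card_congr (subgroupsOfIndexProdEquiv hn), Nat.card_sigma,
    ← Finset.sum_coe_sort n.divisors]
  exact Finset.sum_congr rfl fun c _ =>
    card_sigma_quotient_of_index (Nat.div_ne_zero_of_mem_divisors c.2)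

end Counting

section Tuples

open Finset

theorem Nat.sum_finMulAntidiag_succ {M : Type*} [AddCommMonoid M] (k n : ℕ)
    (f : (Fin (k + 1) → ℕ) → M) :
    ∑ d ∈ finMulAntidiag (k + 1) n, f d =
      ∑ c ∈ n.divisors, ∑ d ∈ finMulAntidiag k (n / c), f (Fin.cons c d) := by
  rw [sum_sigma']
  refine sum_nbij' (fun d => ⟨d 0, Fin.tail d⟩) (fun x => Fin.cons x.1 x.2) ?_ ?_ ?_ ?_ ?_
  · intro d hd
    obtain ⟨hprod, hn⟩ := mem_finMulAntidiag.mp hd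
    rw [Fin.prod_univ_succ] at hprod
    have hc : d 0 ∈ n.divisors := mem_divisors.mpr ⟨Dvd.intro _ hprod, hn⟩
    have htail : ∏ i, Fin.tail d i = n / d 0 := by
      rw [← hprod, Nat.mul_div_cancel_left _ (pos_of_mem_divisors hc)]; rfl
    exact mem_sigma.mpr ⟨hc, mem_finMulAntidiag.mpr ⟨htail, div_ne_zero_of_mem_divisors hc⟩⟩
  · rintro ⟨c, d⟩ h
    obtain ⟨hc, hd⟩ := mem_sigma.mp h
    refine mem_finMulAntidiag.mpr ⟨?_, ne_zero_of_mem_divisors hc⟩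
    simp [Fin.prod_univ_succ, prod_eq_of_mem_finMulAntidiag hd,
      Nat.mul_div_cancel' (dvd_of_mem_divisors hc)]
  · intro d _; exact Fin.cons_self_tail d
  · rintro ⟨c, d⟩ _; simp
  · intro d _; simp

theorem Fin.prod_cons_pow_val {k : ℕ} (c : ℕ) (d : Fin k → ℕ) :
    ∏ i, (Fin.cons c d : Fin (k + 1) → ℕ) i ^ (i : ℕ) = (∏ i, d i) * ∏ i, d i ^ (i : ℕ) := by
  simp [Fin.prod_univ_succ, pow_succ, prod_mul_distrib, mul_comm]

theorem Nat.sum_finMulAntidiag_succ_prod_pow (k n : ℕ) :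
    ∑ d ∈ finMulAntidiag (k + 1) n, ∏ i, d i ^ (i : ℕ) =
      ∑ c ∈ n.divisors, n / c * ∑ d ∈ finMulAntidiag k (n / c), ∏ i, d i ^ (i : ℕ) := by
  rw [sum_finMulAntidiag_succ]
  refine sum_congr rfl fun c _ => ?_
  rw [mul_sum]
  exact sum_congr rfl fun d hd => by rw [Fin.prod_cons_pow_val, prod_eq_of_mem_finMulAntidiag hd]

end Tuples

def AddEquiv.subgroupsOfIndexEquiv {G G' : Type*} [AddGroup G] [AddGroup G'] (e : G ≃+ G')
    (n : ℕ) : {H : AddSubgroup G // H.index = n} ≃ {H : AddSubgroup G' // H.index = n} :=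
  e.mapAddSubgroup.toEquiv.subtypeEquiv fun H => by simp

theorem finite_subgroups_index_pi (k : ℕ) {n : ℕ} (hn : n ≠ 0) :
    Finite {H : AddSubgroup (Fin k → ℤ) // H.index = n} := by
  induction k generalizing n with
  | zero => infer_instance
  | succ k ih =>
    have := finite_subgroups_index_prod (fun m hm => ih hm) hn
    exact Finite.of_equiv _ ((Fin.consLinearEquiv ℤ fun _ => ℤ).toAddEquiv.subgroupsOfIndexEquiv n)

theorem card_subgroups_index_pi (k : ℕ) {n : ℕ} (hn : n ≠ 0) :
    Nat.card {H : AddSubgroup (Fin k → ℤ) // H.index = n} =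
      ∑ d ∈ Nat.finMulAntidiag k n, ∏ i, d i ^ (i : ℕ) := by
  induction k generalizing n with
  | zero =>
    have hidx (H : AddSubgroup (Fin 0 → ℤ)) : H.index = 1 := by
      rw [Subsingleton.elim H ⊤, index_top]
    rcases eq_or_ne n 1 with rfl | h
    · simp [hidx, Nat.finMulAntidiag_one]
    · simp [hidx, Nat.finMulAntidiag_zero_left h, h.symm]
  | succ k ih =>
    rw [← Nat.card_congr ((Fin.consLinearEquiv ℤ fun _ => ℤ).toAddEquiv.subgroupsOfIndexEquiv n),
      card_subgroups_index_prod (fun m hm => finite_subgroups_index_pi k hm) hn,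
      Nat.sum_finMulAntidiag_succ_prod_pow]
    exact Finset.sum_congr rfl fun c hc => by rw [ih (Nat.div_ne_zero_of_mem_divisors hc)]

theorem subgroups_of_index_in_Zk_general (k : ℕ) (n : ℕ) (hn : 0 < n) :
    Nat.card {H : AddSubgroup (Fin k → ℤ) // H.index = n} =
      ∑ d ∈ (Fintype.piFinset (fun _ : Fin k => n.divisors)).filter
          (fun d => ∏ i, d i = n),
        ∏ i, d i ^ (i : ℕ) := by
  rw [← Nat.finMulAntidiag_eq_piFinset_divisors_filter dvd_rfl hn.ne']
  exact card_subgroups_index_pi k hn.ne'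

theorem subgroups_of_index_in_Zk (k : ℕ) (hk : 1 ≤ k) (n : ℕ) (hn : 0 < n) :
    Nat.card {H : AddSubgroup (Fin k → ℤ) // H.index = n} =
      ∑ d ∈ (Fintype.piFinset (fun _ : Fin k => n.divisors)).filter
          (fun d => ∏ i, d i = n),
        ∏ i, d i ^ (i : ℕ) :=
  subgroups_of_index_in_Zk_general k n hn
end
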